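/- arXiv:2004.13967 — 7 statements merged into one kernel-verified Lean document; each statement's English description precedes it below -/
import Mathlib

section
/- For θ > 0, the function φ(d) = d/(e^{2θd} - 1) is convex on (0,1): its second derivative φ''(d) = (4θ e^{2θd}/(e^{2θd}-1)³)·(1 + θd + e^{2θd}(θd - 1)) is nonnegative for d ∈ (0,1). -/
open Real Set

/-- Key inequality: for `t ≥ 0`, `0 ≤ 1 + t + e^{2t}(t-1)`. -/
lemma key_ineq (t : ℝ) (ht : 0 ≤ t) : 0 ≤ 1 + t + exp (2 * t) * (t - 1) := by
  set H : ℝ → ℝ := fun t => 1 + t + exp (2 * t) * (t - 1) with hH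
  have hderiv : ∀ x : ℝ, HasDerivAt H (1 + (2 * exp (2 * x) * (x - 1) + exp (2 * x) * 1)) x := by
    intro x
    have h1 : HasDerivAt (fun y : ℝ => 2 * y) 2 x := by
      simpa using (hasDerivAt_id x).const_mul 2
    have hexp : HasDerivAt (fun y : ℝ => exp (2 * y)) (2 * exp (2 * x)) x := by
      simpa [mul_comm] using h1.exp
    have hsub : HasDerivAt (fun y : ℝ => y - 1) 1 x := (hasDerivAt_id x).sub_const 1
    have hmul := hexp.mul hsub
    have hlin : HasDerivAt (fun y : ℝ => 1 + y) 1 x := by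
      simpa using (hasDerivAt_id x).const_add 1
    exact hlin.add hmul
  have hdiff : Differentiable ℝ H := fun x => (hderiv x).differentiableAt
  have hd_nonneg : ∀ x : ℝ, 0 ≤ deriv H x := by
    intro x
    rw [(hderiv x).deriv]
    have h1 : 1 - 2 * x ≤ exp (-(2 * x)) := by
      have := Real.add_one_le_exp (-(2 * x)); linarith
    have h2 : exp (2 * x) * (1 - 2 * x) ≤ exp (2 * x) * exp (-(2 * x)) :=
      mul_le_mul_of_nonneg_left h1 (exp_pos _).le
    rw [← Real.exp_add] at h2
    simp only [add_neg_cancel, Real.exp_zero] at h2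
    nlinarith [exp_pos (2 * x)]
  have hmono : Monotone H := monotone_of_deriv_nonneg hdiff hd_nonneg
  have h0 : H 0 = 0 := by simp [hH]
  have := hmono ht
  rw [h0] at this
  simpa [hH] using this

theorem phi_convex (θ : ℝ) (hθ : 0 < θ)
    (φ : ℝ → ℝ) (hφ : ∀ d, φ d = d / (exp (2 * θ * d) - 1)) :
    (∀ d ∈ Ioo (0:ℝ) 1,
        deriv (deriv φ) d =
          4 * θ * exp (2 * θ * d) / (exp (2 * θ * d) - 1) ^ 3 *
            (1 + θ * d + exp (2 * θ * d) * (θ * d - 1)) ∧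
        0 ≤ deriv (deriv φ) d) ∧
      ConvexOn ℝ (Ioo (0:ℝ) 1) φ := by
  have hφfun : φ = fun d => d / (exp (2 * θ * d) - 1) := funext hφ
  subst hφfun
  -- positivity of the denominator
  have hEpos : ∀ d : ℝ, 0 < d → 0 < exp (2 * θ * d) - 1 := by
    intro d hd
    have h1 : (0:ℝ) < 2 * θ * d := by positivity
    have : exp 0 < exp (2 * θ * d) := Real.exp_lt_exp.mpr h1
    rw [Real.exp_zero] at this
    linarith
  -- auxiliary derivative helpers
  have hexpD : ∀ d : ℝ, HasDerivAt (fun x : ℝ => exp (2 * θ * x))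
      (2 * θ * exp (2 * θ * d)) d := by
    intro d
    have h1 : HasDerivAt (fun x : ℝ => 2 * θ * x) (2 * θ) d := by
      simpa using (hasDerivAt_id d).const_mul (2 * θ)
    simpa [mul_comm] using h1.exp
  -- first derivative
  set F1 : ℝ → ℝ := fun d =>
    (1 * (exp (2 * θ * d) - 1) - d * (2 * θ * exp (2 * θ * d))) /
      (exp (2 * θ * d) - 1) ^ 2 with hF1
  have hD1 : ∀ d : ℝ, 0 < d →
      HasDerivAt (fun x : ℝ => x / (exp (2 * θ * x) - 1)) (F1 d) d := by
    intro d hd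
    have hden : HasDerivAt (fun x : ℝ => exp (2 * θ * x) - 1)
        (2 * θ * exp (2 * θ * d)) d := (hexpD d).sub_const 1
    exact (hasDerivAt_id d).div hden (ne_of_gt (hEpos d hd))
  -- second derivative
  have hD2 : ∀ d : ℝ, 0 < d → HasDerivAt F1
      (4 * θ * exp (2 * θ * d) / (exp (2 * θ * d) - 1) ^ 3 *
        (1 + θ * d + exp (2 * θ * d) * (θ * d - 1))) d := by
    intro d hd
    have hne : exp (2 * θ * d) - 1 ≠ 0 := ne_of_gt (hEpos d hd)
    have hden : HasDerivAt (fun x : ℝ => exp (2 * θ * x) - 1)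
        (2 * θ * exp (2 * θ * d)) d := (hexpD d).sub_const 1
    have hu : HasDerivAt
        (fun x : ℝ => 1 * (exp (2 * θ * x) - 1) - x * (2 * θ * exp (2 * θ * x)))
        (1 * (2 * θ * exp (2 * θ * d)) -
          (1 * (2 * θ * exp (2 * θ * d)) + d * (2 * θ * (2 * θ * exp (2 * θ * d))))) d := by
      exact (hden.const_mul 1).sub ((hasDerivAt_id d).mul ((hexpD d).const_mul (2 * θ)))
    have hv : HasDerivAt (fun x : ℝ => (exp (2 * θ * x) - 1) ^ 2)
        (2 * (exp (2 * θ * d) - 1) ^ 1 * (2 * θ * exp (2 * θ * d))) d := by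
      exact (hden.pow 2).congr_deriv (by norm_num)
    have hq : HasDerivAt F1 _ d := hu.div hv (pow_ne_zero 2 hne)
    convert hq using 1
    have hEne : exp (2 * θ * d) ≠ 0 := (exp_pos _).ne'
    field_simp
    ring
  -- deriv φ agrees with F1 on (0, ∞)
  have hderiv1 : ∀ d : ℝ, 0 < d →
      deriv (fun x : ℝ => x / (exp (2 * θ * x) - 1)) d = F1 d :=
    fun d hd => (hD1 d hd).deriv
  have hderiv2 : ∀ d : ℝ, 0 < d →
      deriv (deriv (fun x : ℝ => x / (exp (2 * θ * x) - 1))) d =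
        4 * θ * exp (2 * θ * d) / (exp (2 * θ * d) - 1) ^ 3 *
          (1 + θ * d + exp (2 * θ * d) * (θ * d - 1)) := by
    intro d hd
    have hev : deriv (fun x : ℝ => x / (exp (2 * θ * x) - 1)) =ᶠ[nhds d] F1 := by
      filter_upwards [Ioi_mem_nhds hd] with x hx using hderiv1 x hx
    rw [Filter.EventuallyEq.deriv_eq hev]
    exact (hD2 d hd).deriv
  have hnonneg : ∀ d : ℝ, 0 < d →
      0 ≤ 4 * θ * exp (2 * θ * d) / (exp (2 * θ * d) - 1) ^ 3 *
          (1 + θ * d + exp (2 * θ * d) * (θ * d - 1)) := by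
    intro d hd
    have h1 : 0 < (exp (2 * θ * d) - 1) ^ 3 := pow_pos (hEpos d hd) 3
    have h2 : 0 ≤ 4 * θ * exp (2 * θ * d) / (exp (2 * θ * d) - 1) ^ 3 :=
      div_nonneg (by positivity) h1.le
    have h3 : 0 ≤ 1 + θ * d + exp (2 * θ * d) * (θ * d - 1) := by
      have := key_ineq (θ * d) (by positivity)
      have he : 2 * (θ * d) = 2 * θ * d := by ring
      rw [he] at this
      linarith
    exact mul_nonneg h2 h3
  refine ⟨fun d hd => ⟨hderiv2 d hd.1, (hderiv2 d hd.1).symm ▸ hnonneg d hd.1⟩, ?_⟩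
  -- convexity
  have hInt : interior (Ioo (0:ℝ) 1) = Ioo (0:ℝ) 1 := interior_Ioo
  apply convexOn_of_deriv2_nonneg (convex_Ioo 0 1)
  · intro x hx
    exact ((hD1 x hx.1).differentiableAt.continuousAt).continuousWithinAt
  · rw [hInt]
    intro x hx
    exact (hD1 x hx.1).differentiableAt.differentiableWithinAt
  · rw [hInt]
    intro x hx
    have hev : deriv (fun y : ℝ => y / (exp (2 * θ * y) - 1)) =ᶠ[nhds x] F1 := by
      filter_upwards [Ioi_mem_nhds hx.1] with y hy using hderiv1 y hy
    have : DifferentiableAt ℝ (deriv (fun y : ℝ => y / (exp (2 * θ * y) - 1))) x :=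
      (hD2 x hx.1).differentiableAt.congr_of_eventuallyEq hev
    exact this.differentiableWithinAt
  · rw [hInt]
    intro x hx
    have : deriv^[2] (fun y : ℝ => y / (exp (2 * θ * y) - 1)) x =
        deriv (deriv (fun y : ℝ => y / (exp (2 * θ * y) - 1))) x := by
      simp [Function.iterate_succ, Function.iterate_one]
    rw [this, hderiv2 x hx.1]
    exact hnonneg x hx.1
end

section
/- Let θ > 0 and let 0 = x₁ < x₂ < … < x_n = 1 with spacings d_i = x_{i+1} - x_i. For the matrix P with entries (P)_{jk} = e^{-θ|x_j - x_k|}, the quadratic form 1ᵀP⁻¹1 equals 1 + ∑_{i=1}^{n-1} (e^{θd_i} - 1)/(e^{θd_i} + 1). -/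
open Real Set Matrix
open Real Matrix Finset

noncomputable def Lmat (θ : ℝ) (n : ℕ) (x : Fin (n+1) → ℝ) :
    Matrix (Fin (n+1)) (Fin (n+1)) ℝ :=
  fun j k => if k ≤ j then Real.exp (θ * (x k - x j)) else 0

noncomputable def dvec (θ : ℝ) (n : ℕ) (x : Fin (n+1) → ℝ) : Fin (n+1) → ℝ :=
  fun j => if j.val = 0 then 1 else
    1 - Real.exp (θ * (x ⟨j.val - 1, Nat.lt_of_le_of_lt (Nat.sub_le _ _) j.isLt⟩ - x j)) ^ 2

noncomputable def wvec (θ : ℝ) (n : ℕ) (x : Fin (n+1) → ℝ) : Fin (n+1) → ℝ :=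
  fun j => if j.val = 0 then 1 else
    1 - Real.exp (θ * (x ⟨j.val - 1, Nat.lt_of_le_of_lt (Nat.sub_le _ _) j.isLt⟩ - x j))

noncomputable def xext (n : ℕ) (x : Fin (n+1) → ℝ) : ℕ → ℝ :=
  fun m => x ⟨min m n, Nat.lt_succ_of_le (min_le_right m n)⟩

lemma xe_eq (n : ℕ) (x : Fin (n+1) → ℝ) (m : ℕ) (h : m < n+1) :
    xext n x m = x ⟨m, h⟩ := by
  unfold xext; congr 1; exact Fin.ext (Nat.min_eq_left (by omega))

lemma tele (F : ℕ → ℝ) (J : ℕ) :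
    ∑ m ∈ Finset.range (J+1), (F m - if m = 0 then 0 else F (m-1)) = F J := by
  induction J with
  | zero => simp
  | succ k ih => rw [Finset.sum_range_succ, ih]; simp

lemma finsum_le (n : ℕ) (j : Fin (n+1)) (g : ℕ → ℝ) :
    (∑ m : Fin (n+1), if (m:ℕ) ≤ (j:ℕ) then g (m:ℕ) else 0)
      = ∑ m ∈ Finset.range (j.val+1), g m := by
  rw [Fin.sum_univ_eq_sum_range (fun m' => if m' ≤ (j:ℕ) then g m' else 0) (n+1)]
  calc ∑ m ∈ Finset.range (n+1), (if m ≤ (j:ℕ) then g m else 0)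
      = ∑ m ∈ Finset.range (j.val+1), (if m ≤ (j:ℕ) then g m else 0) := by
        refine (Finset.sum_subset ?_ ?_).symm
        · exact Finset.range_subset_range.2 (by omega)
        · intro m hm hm'
          simp only [Finset.mem_range] at hm hm'
          rw [if_neg (by omega)]
    _ = ∑ m ∈ Finset.range (j.val+1), g m := by
        refine Finset.sum_congr rfl (fun m hm => ?_)
        simp only [Finset.mem_range] at hm
        rw [if_pos (by omega)]

lemma entry_le (θ : ℝ) (n : ℕ) (x : Fin (n+1) → ℝ) (hx : StrictMono x)
    (j k : Fin (n+1)) (hjk : j ≤ k) :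
    (Lmat θ n x * diagonal (dvec θ n x) * (Lmat θ n x)ᵀ) j k
      = Real.exp (-θ * |x j - x k|) := by
  set c : ℝ := ((Real.exp (θ * x j)) * (Real.exp (θ * x k)))⁻¹ with hc
  set G : ℕ → ℝ := fun m' => Real.exp (θ * xext n x m') ^ 2 with hG
  have key : ∀ m : Fin (n+1),
      (Lmat θ n x * diagonal (dvec θ n x)) j m * (Lmat θ n x)ᵀ m k
        = if (m:ℕ) ≤ (j:ℕ) then (fun m' => (G m' - if m' = 0 then 0 else G (m'-1)) * c) (m:ℕ) else 0 := by
    intro m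
    rw [Matrix.mul_diagonal, Matrix.transpose_apply]
    simp only [Lmat, dvec]
    by_cases hm : m ≤ j
    · have hmk : m ≤ k := le_trans hm hjk
      rw [if_pos hm, if_pos hmk, if_pos (show (m:ℕ) ≤ (j:ℕ) from hm)]
      have e1 : Real.exp (θ * (x m - x j)) = Real.exp (θ * x m) / Real.exp (θ * x j) := by
        rw [mul_sub, Real.exp_sub]
      have e2 : Real.exp (θ * (x m - x k)) = Real.exp (θ * x m) / Real.exp (θ * x k) := by
        rw [mul_sub, Real.exp_sub]
      by_cases h0 : (m:ℕ) = 0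
      · rw [if_pos h0, if_pos h0]
        have : xext n x (m:ℕ) = x m := by rw [xe_eq n x _ m.isLt]
        simp only [hG, this, e1, e2, hc]
        field_simp
        ring
      · rw [if_neg h0, if_neg h0]
        have hlt : (m:ℕ) - 1 < n + 1 := Nat.lt_of_le_of_lt (Nat.sub_le _ _) m.isLt
        have e3 : Real.exp (θ * (x ⟨(m:ℕ) - 1, hlt⟩ - x m))
            = Real.exp (θ * x ⟨(m:ℕ) - 1, hlt⟩) / Real.exp (θ * x m) := by
          rw [mul_sub, Real.exp_sub]
        have hx1 : xext n x (m:ℕ) = x m := by rw [xe_eq n x _ m.isLt]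
        have hx2 : xext n x ((m:ℕ) - 1) = x ⟨(m:ℕ) - 1, hlt⟩ := xe_eq n x _ hlt
        simp only [hG, hx1, hx2, e1, e2, e3, hc]
        have h1 : Real.exp (θ * x m) ≠ 0 := Real.exp_ne_zero _
        have h2 : Real.exp (θ * x j) ≠ 0 := Real.exp_ne_zero _
        have h3 : Real.exp (θ * x k) ≠ 0 := Real.exp_ne_zero _
        field_simp
    · rw [if_neg hm, if_neg (show ¬((m:ℕ) ≤ (j:ℕ)) from hm), zero_mul, zero_mul]
  rw [Matrix.mul_apply]
  rw [Finset.sum_congr rfl (fun m _ => key m)]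
  rw [finsum_le n j (fun m' => (G m' - if m' = 0 then 0 else G (m'-1)) * c)]
  rw [← Finset.sum_mul, tele G j.val]
  have hxj : xext n x j.val = x j := by rw [xe_eq n x _ j.isLt]
  have habs : |x j - x k| = x k - x j := by
    rw [abs_sub_comm]; exact abs_of_nonneg (sub_nonneg.2 (hx.monotone hjk))
  simp only [hG, hxj, hc, habs]
  rw [show -θ * (x k - x j) = θ * x j - θ * x k by ring, Real.exp_sub]
  have h2 : Real.exp (θ * x j) ≠ 0 := Real.exp_ne_zero _
  have h3 : Real.exp (θ * x k) ≠ 0 := Real.exp_ne_zero _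
  field_simp

lemma fact_symm (θ : ℝ) (n : ℕ) (x : Fin (n+1) → ℝ) (j k : Fin (n+1)) :
    (Lmat θ n x * diagonal (dvec θ n x) * (Lmat θ n x)ᵀ) j k
      = (Lmat θ n x * diagonal (dvec θ n x) * (Lmat θ n x)ᵀ) k j := by
  have h : ∀ a b : Fin (n+1), (Lmat θ n x * diagonal (dvec θ n x) * (Lmat θ n x)ᵀ) a b
      = ∑ m, Lmat θ n x a m * dvec θ n x m * Lmat θ n x b m := by
    intro a b
    rw [Matrix.mul_apply]
    exact Finset.sum_congr rfl fun m _ => by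
      rw [Matrix.mul_diagonal, Matrix.transpose_apply]
  rw [h, h]
  exact Finset.sum_congr rfl (fun m _ => by ring)

lemma factor (θ : ℝ) (n : ℕ) (x : Fin (n+1) → ℝ) (hx : StrictMono x)
    (P : Matrix (Fin (n+1)) (Fin (n+1)) ℝ)
    (hP : ∀ j k, P j k = Real.exp (-θ * |x j - x k|)) :
    P = Lmat θ n x * diagonal (dvec θ n x) * (Lmat θ n x)ᵀ := by
  ext j k
  rw [hP]
  rcases le_total j k with h | h
  · exact (entry_le θ n x hx j k h).symm
  · rw [fact_symm, entry_le θ n x hx k j h, abs_sub_comm]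

lemma L_det (θ : ℝ) (n : ℕ) (x : Fin (n+1) → ℝ) : (Lmat θ n x).det = 1 := by
  rw [Matrix.det_of_lowerTriangular (Lmat θ n x)
    (by intro i j hij
        have : ¬ (j ≤ i) := not_le.2 (by exact_mod_cast hij)
        simp [Lmat, this])]
  simp [Lmat]

lemma dvec_pos (θ : ℝ) (hθ : 0 < θ) (n : ℕ) (x : Fin (n+1) → ℝ) (hx : StrictMono x)
    (j : Fin (n+1)) : 0 < dvec θ n x j := by
  unfold dvec
  by_cases h0 : j.val = 0
  · rw [if_pos h0]; norm_num
  · rw [if_neg h0]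
    have hlt : (⟨j.val - 1, Nat.lt_of_le_of_lt (Nat.sub_le _ _) j.isLt⟩ : Fin (n+1)) < j := by
      rw [Fin.lt_def]; show j.val - 1 < j.val; omega
    have hxx : x ⟨j.val - 1, Nat.lt_of_le_of_lt (Nat.sub_le _ _) j.isLt⟩ - x j < 0 :=
      sub_neg.2 (hx hlt)
    have : Real.exp (θ * (x ⟨j.val - 1, Nat.lt_of_le_of_lt (Nat.sub_le _ _) j.isLt⟩ - x j)) < 1 :=
      Real.exp_lt_one_iff.mpr (mul_neg_of_pos_of_neg hθ hxx)
    nlinarith [Real.exp_pos (θ * (x ⟨j.val - 1, Nat.lt_of_le_of_lt (Nat.sub_le _ _) j.isLt⟩ - x j))]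

lemma L_mulVec_w (θ : ℝ) (n : ℕ) (x : Fin (n+1) → ℝ) :
    Lmat θ n x *ᵥ wvec θ n x = fun _ => (1:ℝ) := by
  funext j
  set F : ℕ → ℝ := fun m' => Real.exp (θ * xext n x m') with hF
  set c : ℝ := (Real.exp (θ * x j))⁻¹ with hc
  have key : ∀ m : Fin (n+1), Lmat θ n x j m * wvec θ n x m
      = if (m:ℕ) ≤ (j:ℕ) then (fun m' => (F m' - if m' = 0 then 0 else F (m'-1)) * c) (m:ℕ) else 0 := by
    intro m
    simp only [Lmat, wvec]
    by_cases hm : m ≤ j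
    · rw [if_pos hm, if_pos (show (m:ℕ) ≤ (j:ℕ) from hm)]
      have e1 : Real.exp (θ * (x m - x j)) = Real.exp (θ * x m) / Real.exp (θ * x j) := by
        rw [mul_sub, Real.exp_sub]
      by_cases h0 : (m:ℕ) = 0
      · rw [if_pos h0, if_pos h0]
        have hxm : xext n x (m:ℕ) = x m := by rw [xe_eq n x _ m.isLt]
        simp only [hF, hxm, e1, hc]
        field_simp
        simp
      · rw [if_neg h0, if_neg h0]
        have hlt : (m:ℕ) - 1 < n + 1 := Nat.lt_of_le_of_lt (Nat.sub_le _ _) m.isLt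
        have e3 : Real.exp (θ * (x ⟨(m:ℕ) - 1, hlt⟩ - x m))
            = Real.exp (θ * x ⟨(m:ℕ) - 1, hlt⟩) / Real.exp (θ * x m) := by
          rw [mul_sub, Real.exp_sub]
        have hx1 : xext n x (m:ℕ) = x m := by rw [xe_eq n x _ m.isLt]
        have hx2 : xext n x ((m:ℕ) - 1) = x ⟨(m:ℕ) - 1, hlt⟩ := xe_eq n x _ hlt
        simp only [hF, hx1, hx2, e1, e3, hc]
        have h1 : Real.exp (θ * x m) ≠ 0 := Real.exp_ne_zero _
        have h2 : Real.exp (θ * x j) ≠ 0 := Real.exp_ne_zero _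
        field_simp
    · rw [if_neg hm, if_neg (show ¬((m:ℕ) ≤ (j:ℕ)) from hm), zero_mul]
  show (∑ m, Lmat θ n x j m * wvec θ n x m) = 1
  rw [Finset.sum_congr rfl (fun m _ => key m),
    finsum_le n j (fun m' => (F m' - if m' = 0 then 0 else F (m'-1)) * c),
    ← Finset.sum_mul, tele F j.val]
  have hxj : xext n x j.val = x j := by rw [xe_eq n x _ j.isLt]
  simp only [hF, hxj, hc]
  exact mul_inv_cancel₀ (Real.exp_ne_zero _)

theorem ones_quadform_exponential (θ : ℝ) (hθ : 0 < θ) (n : ℕ)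
    (x : Fin (n + 1) → ℝ) (hx : StrictMono x) (h0 : x 0 = 0) (h1 : x (Fin.last n) = 1)
    (P : Matrix (Fin (n + 1)) (Fin (n + 1)) ℝ)
    (hP : ∀ j k, P j k = exp (-θ * |x j - x k|)) :
    (fun _ => (1:ℝ)) ⬝ᵥ (P⁻¹ *ᵥ fun _ => (1:ℝ)) =
      1 + ∑ i : Fin n,
        (exp (θ * (x i.succ - x i.castSucc)) - 1) /
          (exp (θ * (x i.succ - x i.castSucc)) + 1) := by
  have hPf := factor θ n x hx P hP
  have hLdet : IsUnit (Lmat θ n x).det := by rw [L_det]; exact isUnit_one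
  have hDdet : IsUnit (diagonal (dvec θ n x)).det := by
    rw [Matrix.det_diagonal]
    exact (Finset.prod_ne_zero_iff.mpr
      (fun j _ => ne_of_gt (dvec_pos θ hθ n x hx j))).isUnit
  have hw : (Lmat θ n x)⁻¹ *ᵥ (fun _ => (1:ℝ)) = wvec θ n x := by
    rw [← L_mulVec_w θ n x, Matrix.mulVec_mulVec, Matrix.nonsing_inv_mul _ hLdet,
      Matrix.one_mulVec]
  have hDinv : (diagonal (dvec θ n x))⁻¹ = diagonal (fun i => (dvec θ n x i)⁻¹) := by
    refine Matrix.inv_eq_right_inv ?_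
    rw [Matrix.diagonal_mul_diagonal,
      show (fun i => dvec θ n x i * (dvec θ n x i)⁻¹) = fun _ => (1:ℝ) from
        funext fun i => mul_inv_cancel₀ (ne_of_gt (dvec_pos θ hθ n x hx i)),
      Matrix.diagonal_one]
  have hinv : P⁻¹ = ((Lmat θ n x)ᵀ)⁻¹ * ((diagonal (dvec θ n x))⁻¹ * (Lmat θ n x)⁻¹) := by
    rw [hPf, Matrix.mul_inv_rev, Matrix.mul_inv_rev]
  rw [hinv, ← Matrix.mulVec_mulVec, ← Matrix.transpose_nonsing_inv,
    Matrix.dotProduct_mulVec, Matrix.vecMul_transpose, hw, ← Matrix.mulVec_mulVec, hw, hDinv]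
  have hmv : (diagonal (fun i => (dvec θ n x i)⁻¹) *ᵥ wvec θ n x)
      = fun i => (dvec θ n x i)⁻¹ * wvec θ n x i :=
    funext fun i => Matrix.mulVec_diagonal _ _ _
  rw [hmv]
  show (∑ i, wvec θ n x i * ((dvec θ n x i)⁻¹ * wvec θ n x i)) = _
  rw [Fin.sum_univ_succ]
  have h0term : wvec θ n x 0 * ((dvec θ n x 0)⁻¹ * wvec θ n x 0) = 1 := by
    simp [wvec, dvec]
  rw [h0term]
  congr 1
  refine Finset.sum_congr rfl (fun i _ => ?_)
  have hlt : ((i.succ : Fin (n+1)) : ℕ) - 1 < n + 1 :=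
    Nat.lt_of_le_of_lt (Nat.sub_le _ _) (i.succ).isLt
  have hidx : (⟨((i.succ : Fin (n+1)) : ℕ) - 1, hlt⟩ : Fin (n+1)) = i.castSucc := by
    apply Fin.ext; simp
  have hne : ¬(((i.succ : Fin (n+1)) : ℕ) = 0) := by simp
  simp only [wvec, dvec, if_neg hne, hidx]
  set s := Real.exp (θ * (x i.castSucc - x i.succ)) with hs
  set E := Real.exp (θ * (x i.succ - x i.castSucc)) with hE
  have hEs : E * s = 1 := by
    rw [hE, hs, ← Real.exp_add,
      show θ*(x i.succ - x i.castSucc) + θ*(x i.castSucc - x i.succ) = 0 by ring,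
      Real.exp_zero]
  have hspos : 0 < s := Real.exp_pos _
  have hEpos : 0 < E := Real.exp_pos _
  have hs1 : s < 1 := Real.exp_lt_one_iff.mpr
    (mul_neg_of_pos_of_neg hθ (sub_neg.2 (hx (Fin.castSucc_lt_succ : i.castSucc < i.succ))))
  have h1 : (1:ℝ) - s^2 ≠ 0 := by nlinarith
  have h2 : E + 1 ≠ 0 := by positivity
  field_simp
  nlinarith [hEs, hspos, hs1]
end

section
/- Let θ > 0 and n ≥ 2. The function Q(d₁,…,d_{n-1}) = 1/(∑_{i=1}^{n-1} ω(d_i)), with ω(d) = d + (e^{θd} - 1)/(e^{θd} + 1), is Schur-convex on the simplex {d_i > 0 : ∑d_i = 1} and is minimized at the equispaced point d_i = 1/(n-1). -/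
open Real Set Finset

/-- `x` is majorized by `y` (Hardy–Littlewood–Pólya characterization). -/
def MajorizedBy {m : ℕ} (x y : Fin m → ℝ) : Prop :=
  (∑ i, x i = ∑ i, y i) ∧
    ∀ t : ℝ, (∑ i, max (x i - t) 0) ≤ ∑ i, max (y i - t) 0

/-- Schur-convexity of `f` on a (symmetric) set `s`. -/
def SchurConvexOn {m : ℕ} (s : Set (Fin m → ℝ)) (f : (Fin m → ℝ) → ℝ) : Prop :=
  ∀ x ∈ s, ∀ y ∈ s, MajorizedBy x y → f x ≤ f y

-- tangent line inequality for functions with antitone derivative on [0,1]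
lemma tangent_le (f f' : ℝ → ℝ)
    (hd : ∀ t ∈ Icc (0:ℝ) 1, HasDerivAt f (f' t) t)
    (hmono : ∀ u v, u ∈ Icc (0:ℝ) 1 → v ∈ Icc (0:ℝ) 1 → u ≤ v → f' v ≤ f' u)
    {u v : ℝ} (hu : u ∈ Icc (0:ℝ) 1) (hv : v ∈ Icc (0:ℝ) 1) :
    f v - f u ≤ f' u * (v - u) := by
  rcases lt_trichotomy u v with h | h | h
  · have hsub : Icc u v ⊆ Icc (0:ℝ) 1 := Icc_subset_Icc hu.1 hv.2
    have hcont : ContinuousOn f (Icc u v) := fun t ht =>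
      ((hd t (hsub ht)).continuousAt).continuousWithinAt
    obtain ⟨c, hc, hceq⟩ := exists_hasDerivAt_eq_slope f f' h hcont
      (fun t ht => hd t (hsub (Ioo_subset_Icc_self ht)))
    have hle : f' c ≤ f' u := hmono u c hu (hsub (Ioo_subset_Icc_self hc)) hc.1.le
    have hvu : 0 < v - u := by linarith
    rw [eq_div_iff (by linarith)] at hceq
    nlinarith
  · simp [h]
  · have hsub : Icc v u ⊆ Icc (0:ℝ) 1 := Icc_subset_Icc hv.1 hu.2
    have hcont : ContinuousOn f (Icc v u) := fun t ht =>
      ((hd t (hsub ht)).continuousAt).continuousWithinAt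
    obtain ⟨c, hc, hceq⟩ := exists_hasDerivAt_eq_slope f f' h hcont
      (fun t ht => hd t (hsub (Ioo_subset_Icc_self ht)))
    have hle : f' u ≤ f' c := hmono c u (hsub (Ioo_subset_Icc_self hc)) hu hc.2.le
    have hvu : 0 < u - v := by linarith
    rw [eq_div_iff (by linarith)] at hceq
    nlinarith

-- Abel-type summation bound
lemma abel_nonpos (m : ℕ) (D G : ℕ → ℝ)
    (hD : ∀ i j, i ≤ j → D i ≤ D j) (hG : ∀ k, 0 ≤ G k) (hG0 : G 0 = 0) (hGm : G m = 0) :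
    ∑ i ∈ range m, D i * (G (i + 1) - G i) ≤ 0 := by
  have key : ∀ k, ∑ i ∈ range k, D i * (G (i + 1) - G i) ≤ D k * G k := by
    intro k
    induction k with
    | zero => simp [hG0]
    | succ k ih =>
        rw [Finset.sum_range_succ]
        have h1 : D k ≤ D (k+1) := hD k (k+1) (Nat.le_succ k)
        nlinarith [hG (k+1), hG k]
  calc ∑ i ∈ range m, D i * (G (i + 1) - G i) ≤ D m * G m := key m
    _ = 0 := by rw [hGm]; ring

lemma karamata_nat (m : ℕ) (f f' : ℝ → ℝ)
    (hd : ∀ t ∈ Icc (0:ℝ) 1, HasDerivAt f (f' t) t)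
    (hmono : ∀ u v, u ∈ Icc (0:ℝ) 1 → v ∈ Icc (0:ℝ) 1 → u ≤ v → f' v ≤ f' u)
    (X Y : ℕ → ℝ) (hX : ∀ i < m, X i ∈ Icc (0:ℝ) 1) (hY : ∀ i < m, Y i ∈ Icc (0:ℝ) 1)
    (hXa : ∀ i j, i ≤ j → j < m → X j ≤ X i)
    (hpart : ∀ k, k ≤ m → ∑ i ∈ range k, X i ≤ ∑ i ∈ range k, Y i)
    (hsum : ∑ i ∈ range m, X i = ∑ i ∈ range m, Y i) :
    ∑ i ∈ range m, f (Y i) ≤ ∑ i ∈ range m, f (X i) := by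
  rcases Nat.eq_zero_or_pos m with hm | hm
  · simp [hm]
  set G : ℕ → ℝ := fun k => ∑ i ∈ range (min k m), (Y i - X i) with hGdef
  set D : ℕ → ℝ := fun i => f' (X (min i (m - 1))) with hDdef
  have hminlt : ∀ i : ℕ, min i (m - 1) < m := fun i =>
    lt_of_le_of_lt (min_le_right _ _) (Nat.sub_lt hm one_pos)
  have hD : ∀ i j, i ≤ j → D i ≤ D j := by
    intro i j hij
    have h1 : min i (m - 1) ≤ min j (m - 1) := min_le_min hij le_rfl
    exact hmono _ _ (hX _ (hminlt j)) (hX _ (hminlt i))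
      (hXa _ _ h1 (hminlt j))
  have hG : ∀ k, 0 ≤ G k := by
    intro k
    have := hpart (min k m) (min_le_right _ _)
    simp only [hGdef, Finset.sum_sub_distrib]
    linarith
  have hG0 : G 0 = 0 := by simp [hGdef]
  have hGm : G m = 0 := by
    simp only [hGdef, min_self, Finset.sum_sub_distrib]
    linarith
  have key : ∀ i ∈ range m, f (Y i) - f (X i) ≤ D i * (G (i + 1) - G i) := by
    intro i hi
    rw [Finset.mem_range] at hi
    have hDi : D i = f' (X i) := by
      simp only [hDdef]
      congr 1
      · congr 1
        omega
    have hGi : G (i + 1) - G i = Y i - X i := by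
      have h1 : min (i + 1) m = i + 1 := by omega
      have h2 : min i m = i := by omega
      simp only [hGdef, h1, h2, Finset.sum_range_succ]
      ring
    rw [hDi, hGi]
    exact tangent_le f f' hd hmono (hX i hi) (hY i hi)
  have h1 : ∑ i ∈ range m, (f (Y i) - f (X i)) ≤ ∑ i ∈ range m, D i * (G (i + 1) - G i) :=
    Finset.sum_le_sum key
  have h2 := abel_nonpos m D G hD hG hG0 hGm
  rw [Finset.sum_sub_distrib] at h1
  linarith

lemma karamata_fin (m : ℕ) (f f' : ℝ → ℝ)
    (hd : ∀ t ∈ Icc (0:ℝ) 1, HasDerivAt f (f' t) t)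
    (hmono : ∀ u v, u ∈ Icc (0:ℝ) 1 → v ∈ Icc (0:ℝ) 1 → u ≤ v → f' v ≤ f' u)
    (x y : Fin m → ℝ) (hx : ∀ i, x i ∈ Icc (0:ℝ) 1) (hy : ∀ i, y i ∈ Icc (0:ℝ) 1)
    (hsum : ∑ i, x i = ∑ i, y i)
    (hHLP : ∀ t : ℝ, (∑ i, max (x i - t) 0) ≤ ∑ i, max (y i - t) 0) :
    ∑ i, f (y i) ≤ ∑ i, f (x i) := by
  -- sorted (decreasing) versions as ℕ-sequences
  set ex : Equiv.Perm (Fin m) := (Fin.revPerm).trans (Tuple.sort x) with hex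
  set ey : Equiv.Perm (Fin m) := (Fin.revPerm).trans (Tuple.sort y) with hey
  set X : ℕ → ℝ := fun i => if h : i < m then x (ex ⟨i, h⟩) else 0 with hXdef
  set Y : ℕ → ℝ := fun i => if h : i < m then y (ey ⟨i, h⟩) else 0 with hYdef
  -- transfer of sums of g-composed values
  have htrans : ∀ g : ℝ → ℝ, ∑ i ∈ range m, g (X i) = ∑ i, g (x i) := by
    intro g
    rw [← Fin.sum_univ_eq_sum_range (fun i => g (X i)) m]
    have : ∀ i : Fin m, g (X i.val) = (fun j => g (x j)) (ex i) := by
      intro i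
      simp only [hXdef, dif_pos i.isLt, Fin.eta]
    rw [Finset.sum_congr rfl (fun i _ => this i)]
    exact Equiv.sum_comp ex (fun j => g (x j))
  have htransY : ∀ g : ℝ → ℝ, ∑ i ∈ range m, g (Y i) = ∑ i, g (y i) := by
    intro g
    rw [← Fin.sum_univ_eq_sum_range (fun i => g (Y i)) m]
    have : ∀ i : Fin m, g (Y i.val) = (fun j => g (y j)) (ey i) := by
      intro i
      simp only [hYdef, dif_pos i.isLt, Fin.eta]
    rw [Finset.sum_congr rfl (fun i _ => this i)]
    exact Equiv.sum_comp ey (fun j => g (y j))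
  -- antitonicity
  have hXa : ∀ i j, i ≤ j → j < m → X j ≤ X i := by
    intro i j hij hj
    have hi : i < m := lt_of_le_of_lt hij hj
    simp only [hXdef, dif_pos hi, dif_pos hj, hex]
    have : (⟨j, hj⟩ : Fin m).rev ≤ (⟨i, hi⟩ : Fin m).rev := by
      rw [Fin.rev_le_rev]; exact hij
    exact Tuple.monotone_sort x this
  have hYa : ∀ i j, i ≤ j → j < m → Y j ≤ Y i := by
    intro i j hij hj
    have hi : i < m := lt_of_le_of_lt hij hj
    simp only [hYdef, dif_pos hi, dif_pos hj, hey]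
    have : (⟨j, hj⟩ : Fin m).rev ≤ (⟨i, hi⟩ : Fin m).rev := by
      rw [Fin.rev_le_rev]; exact hij
    exact Tuple.monotone_sort y this
  have hXmem : ∀ i < m, X i ∈ Icc (0:ℝ) 1 := by
    intro i hi; simp only [hXdef, dif_pos hi]; exact hx _
  have hYmem : ∀ i < m, Y i ∈ Icc (0:ℝ) 1 := by
    intro i hi; simp only [hYdef, dif_pos hi]; exact hy _
  -- partial sums
  have hpart : ∀ k, k ≤ m → ∑ i ∈ range k, X i ≤ ∑ i ∈ range k, Y i := by
    intro k hk
    rcases Nat.eq_zero_or_pos k with h0 | h0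
    · simp [h0]
    set t : ℝ := Y (k - 1) with ht
    have hk1 : k - 1 < m := by omega
    have step1 : ∑ i ∈ range k, X i ≤ k * t + ∑ i ∈ range k, max (X i - t) 0 := by
      have : ∀ i ∈ range k, X i ≤ t + max (X i - t) 0 := by
        intro i _
        have := le_max_left (X i - t) 0
        linarith
      calc ∑ i ∈ range k, X i ≤ ∑ i ∈ range k, (t + max (X i - t) 0) :=
            Finset.sum_le_sum this
        _ = k * t + ∑ i ∈ range k, max (X i - t) 0 := by
            rw [Finset.sum_add_distrib, Finset.sum_const, Finset.card_range]
            simp [nsmul_eq_mul]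
    have step2 : ∑ i ∈ range k, max (X i - t) 0 ≤ ∑ i ∈ range m, max (X i - t) 0 :=
      Finset.sum_le_sum_of_subset_of_nonneg (Finset.range_subset_range.mpr hk)
        (fun i _ _ => le_max_right _ _)
    have step3 : ∑ i ∈ range m, max (X i - t) 0 ≤ ∑ i ∈ range m, max (Y i - t) 0 := by
      rw [htrans (fun u => max (u - t) 0), htransY (fun u => max (u - t) 0)]
      exact hHLP t
    have step4 : ∑ i ∈ range m, max (Y i - t) 0 = ∑ i ∈ range k, max (Y i - t) 0 := by
      rw [Finset.range_eq_Ico, ← Finset.sum_Ico_consecutive _ (Nat.zero_le k) hk,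
        ← Finset.range_eq_Ico]
      have : ∀ i ∈ Finset.Ico k m, max (Y i - t) 0 = 0 := by
        intro i hi
        rw [Finset.mem_Ico] at hi
        have : Y i ≤ t := hYa (k - 1) i (by omega) hi.2
        simp [max_eq_right, sub_nonpos.mpr this]
      rw [Finset.sum_eq_zero this, add_zero]
    have step5 : ∑ i ∈ range k, max (Y i - t) 0 = ∑ i ∈ range k, Y i - k * t := by
      have : ∀ i ∈ range k, max (Y i - t) 0 = Y i - t := by
        intro i hi
        rw [Finset.mem_range] at hi
        have : t ≤ Y i := hYa i (k - 1) (by omega) hk1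
        exact max_eq_left (by linarith)
      rw [Finset.sum_congr rfl this, Finset.sum_sub_distrib, Finset.sum_const,
        Finset.card_range]
      simp [nsmul_eq_mul]
    linarith
  have hsum' : ∑ i ∈ range m, X i = ∑ i ∈ range m, Y i := by
    simpa using (htrans id).trans (hsum.trans (htransY id).symm)
  have := karamata_nat m f f' hd hmono X Y hXmem hYmem hXa hpart hsum'
  rw [htrans f, htransY f] at this
  exact this

lemma omega_hasDeriv (θ : ℝ) (t : ℝ) :
    HasDerivAt (fun u => u + (exp (θ * u) - 1) / (exp (θ * u) + 1))
      (1 + 2 * θ * exp (θ * t) / (exp (θ * t) + 1) ^ 2) t := by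
  have hE : HasDerivAt (fun u : ℝ => exp (θ * u)) (θ * exp (θ * t)) t := by
    have h1 : HasDerivAt (fun u : ℝ => θ * u) θ t := by
      simpa using (hasDerivAt_id t).const_mul θ
    exact ((Real.hasDerivAt_exp (θ * t)).comp t h1).congr_deriv (by ring)
  have hnum : HasDerivAt (fun u : ℝ => exp (θ * u) - 1) (θ * exp (θ * t)) t :=
    hE.sub_const 1
  have hden : HasDerivAt (fun u : ℝ => exp (θ * u) + 1) (θ * exp (θ * t)) t :=
    hE.add_const 1
  have hne : exp (θ * t) + 1 ≠ 0 := by positivity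
  have hdiv := hnum.div hden hne
  have hd := (hasDerivAt_id t).add hdiv
  exact hd.congr_deriv (by ring)
lemma omega_deriv_anti (θ : ℝ) (hθ : 0 < θ) {u v : ℝ} (hu : 0 ≤ u) (huv : u ≤ v) :
    1 + 2 * θ * exp (θ * v) / (exp (θ * v) + 1) ^ 2 ≤
      1 + 2 * θ * exp (θ * u) / (exp (θ * u) + 1) ^ 2 := by
  have h1 : (1:ℝ) ≤ exp (θ * u) := by
    rw [← exp_zero]
    exact exp_le_exp.mpr (by nlinarith)
  have h2 : exp (θ * u) ≤ exp (θ * v) := exp_le_exp.mpr (by nlinarith)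
  have hpu : (0:ℝ) < (exp (θ * u) + 1) ^ 2 := by positivity
  have hpv : (0:ℝ) < (exp (θ * v) + 1) ^ 2 := by positivity
  have key : exp (θ * v) / (exp (θ * v) + 1) ^ 2 ≤ exp (θ * u) / (exp (θ * u) + 1) ^ 2 := by
    rw [div_le_div_iff₀ hpv hpu]
    have hprod : (0:ℝ) ≤ exp (θ * u) * exp (θ * v) - 1 := by nlinarith
    nlinarith [mul_nonneg (sub_nonneg.mpr h2) hprod]
  have h5 := mul_le_mul_of_nonneg_left key (by positivity : (0:ℝ) ≤ 2 * θ)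
  have h3 : 2 * θ * exp (θ * v) / (exp (θ * v) + 1) ^ 2
      = 2 * θ * (exp (θ * v) / (exp (θ * v) + 1) ^ 2) := by ring
  have h4 : 2 * θ * exp (θ * u) / (exp (θ * u) + 1) ^ 2
      = 2 * θ * (exp (θ * u) / (exp (θ * u) + 1) ^ 2) := by ring
  rw [h3, h4]
  linarith

theorem Q_schurConvex_min_equispaced (θ : ℝ) (hθ : 0 < θ) (n : ℕ) (hn : 2 ≤ n)
    (ω : ℝ → ℝ) (hω : ∀ t, ω t = t + (exp (θ * t) - 1) / (exp (θ * t) + 1))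
    (Q : (Fin (n - 1) → ℝ) → ℝ) (hQ : ∀ d, Q d = 1 / ∑ i, ω (d i))
    (s : Set (Fin (n - 1) → ℝ))
    (hs : s = {d | (∀ i, 0 < d i) ∧ ∑ i, d i = 1}) :
    SchurConvexOn s Q ∧ ∀ d ∈ s, Q (fun _ => 1 / (n - 1 : ℝ)) ≤ Q d := by
  have hωfun : ω = fun u => u + (exp (θ * u) - 1) / (exp (θ * u) + 1) := funext hω
  set ω' : ℝ → ℝ := fun t => 1 + 2 * θ * exp (θ * t) / (exp (θ * t) + 1) ^ 2 with hω'
  have hd : ∀ t ∈ Icc (0:ℝ) 1, HasDerivAt ω (ω' t) t := by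
    intro t _
    rw [hωfun]
    exact omega_hasDeriv θ t
  have hmono : ∀ u v, u ∈ Icc (0:ℝ) 1 → v ∈ Icc (0:ℝ) 1 → u ≤ v → ω' v ≤ ω' u :=
    fun u v hu _ huv => omega_deriv_anti θ hθ hu.1 huv
  have hωge : ∀ u : ℝ, 0 ≤ u → u ≤ ω u := by
    intro u hu
    rw [hω]
    have h1 : (1:ℝ) ≤ exp (θ * u) := by
      rw [← exp_zero]
      exact exp_le_exp.mpr (by nlinarith)
    have h2 : (0:ℝ) ≤ (exp (θ * u) - 1) / (exp (θ * u) + 1) :=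
      div_nonneg (by linarith) (by linarith)
    linarith
  -- facts about members of s
  have hmem : ∀ d : Fin (n - 1) → ℝ, d ∈ s → (∀ i, d i ∈ Icc (0:ℝ) 1) ∧ (1:ℝ) ≤ ∑ i, ω (d i) := by
    intro d hd'
    rw [hs] at hd'
    obtain ⟨h1, h2⟩ := hd'
    have hIcc : ∀ i, d i ∈ Icc (0:ℝ) 1 := by
      intro i
      refine ⟨(h1 i).le, ?_⟩
      calc d i ≤ ∑ j, d j :=
            Finset.single_le_sum (fun j _ => (h1 j).le) (Finset.mem_univ i)
        _ = 1 := h2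
    refine ⟨hIcc, ?_⟩
    calc (1:ℝ) = ∑ i, d i := h2.symm
      _ ≤ ∑ i, ω (d i) := Finset.sum_le_sum (fun i _ => hωge (d i) (h1 i).le)
  have schur : SchurConvexOn s Q := by
    intro x hx y hy hmaj
    have hxf := hmem x hx
    have hyf := hmem y hy
    have hk := karamata_fin (n - 1) ω ω' hd hmono x y hxf.1 hyf.1 hmaj.1 hmaj.2
    rw [hQ, hQ]
    exact one_div_le_one_div_of_le (by linarith [hyf.2]) hk
  refine ⟨schur, fun d hd' => ?_⟩
  have hpos : (0:ℝ) < (n:ℝ) - 1 := by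
    have : (2:ℝ) ≤ (n:ℝ) := by exact_mod_cast hn
    linarith
  have hcast : ((n - 1 : ℕ) : ℝ) = (n:ℝ) - 1 := by
    rw [Nat.cast_sub (by omega), Nat.cast_one]
  set c : ℝ := 1 / ((n:ℝ) - 1) with hc
  have hsumc : ∑ _i : Fin (n - 1), c = 1 := by
    rw [Finset.sum_const, Finset.card_univ, Fintype.card_fin, nsmul_eq_mul, hcast, hc]
    field_simp
  have hme : (fun _ : Fin (n - 1) => c) ∈ s := by
    rw [hs]
    exact ⟨fun _ => by positivity, hsumc⟩
  have hd2 : ∑ i, d i = 1 := by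
    rw [hs] at hd'; exact hd'.2
  have hmaj : MajorizedBy (fun _ : Fin (n - 1) => c) d := by
    constructor
    · rw [hsumc, hd2]
    · intro t
      rcases le_or_gt c t with h | h
      · have : ∀ i : Fin (n - 1), max (c - t) 0 = 0 := fun i =>
          max_eq_right (by linarith)
        calc (∑ _i : Fin (n - 1), max (c - t) 0) = 0 := by
              rw [Finset.sum_congr rfl (fun i _ => this i)]; simp
          _ ≤ ∑ i, max (d i - t) 0 :=
              Finset.sum_nonneg (fun i _ => le_max_right _ _)
      · have h1 : ∀ i : Fin (n - 1), max (c - t) 0 = c - t := fun i =>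
          max_eq_left (by linarith)
        calc (∑ _i : Fin (n - 1), max (c - t) 0) = ∑ _i : Fin (n - 1), (c - t) := by
              rw [Finset.sum_congr rfl (fun i _ => h1 i)]
          _ = ∑ i, d i - ∑ _i : Fin (n - 1), t := by
              rw [Finset.sum_sub_distrib, hsumc, hd2]
          _ = ∑ i, (d i - t) := by rw [Finset.sum_sub_distrib]
          _ ≤ ∑ i, max (d i - t) 0 :=
              Finset.sum_le_sum (fun i _ => le_max_left _ _)
  exact schur _ hme d hd' hmaj
end

section
/- Let θ > 0, d_i > 0, and set a ∈ [0, d_i]. For the exponential correlation matrix P of points 0 = x₁ < … < x_n = 1 and the vector σ₀ with entries e^{-θ|x_j - x₀|} where x₀ = x_i + a ∈ [x_i, x_{i+1}], one has σ₀ᵀP⁻¹σ₀ = (e^{-2θa} - 2e^{-2θd_i} + e^{-2θ(d_i - a)})/(1 - e^{-2θd_i}). -/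
open Real Set Matrix

lemma tele_exp (θ : ℝ) (n : ℕ) (x : Fin (n+1) → ℝ) (m : Fin (n+1)) :
    ∑ k : Fin (n+1), (if k ≤ m then Real.exp (2*θ*x k) *
      (Fin.cases (motive := fun _ => ℝ) 1
        (fun j : Fin n => 1 - Real.exp (2*θ*(x j.castSucc - x j.succ))) k) else 0)
      = Real.exp (2*θ*x m) := by
  induction m using Fin.induction with
  | zero =>
    rw [Finset.sum_eq_single 0]
    · simp
    · intro k _ hk
      rw [if_neg]
      simpa [Fin.le_zero_iff] using hk
    · simp
  | succ m ih =>
    have split : ∀ k : Fin (n+1),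
        (if k ≤ m.succ then Real.exp (2*θ*x k) *
          (Fin.cases (motive := fun _ => ℝ) 1
            (fun j : Fin n => 1 - Real.exp (2*θ*(x j.castSucc - x j.succ))) k) else 0)
        = (if k ≤ m.castSucc then Real.exp (2*θ*x k) *
          (Fin.cases (motive := fun _ => ℝ) 1
            (fun j : Fin n => 1 - Real.exp (2*θ*(x j.castSucc - x j.succ))) k) else 0)
          + (if k = m.succ then Real.exp (2*θ*x m.succ) - Real.exp (2*θ*x m.castSucc) else 0) := by
      intro k
      by_cases hk : k = m.succ
      · subst hk
        rw [if_pos le_rfl, if_neg, if_pos rfl, zero_add, Fin.cases_succ, mul_sub, mul_one,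
          ← Real.exp_add]
        · congr 2
          ring
        · simp [Fin.le_def]
      · rw [if_neg hk, add_zero]
        apply if_congr _ rfl rfl
        have hk' : (k : ℕ) ≠ (m : ℕ) + 1 := by simpa [Fin.ext_iff] using hk
        rw [Fin.le_def, Fin.le_def]
        simp only [Fin.val_succ, Fin.coe_castSucc]
        omega
    rw [Finset.sum_congr rfl fun k _ => split k, Finset.sum_add_distrib, ih,
      Finset.sum_ite_eq' Finset.univ m.succ]
    simp

lemma isUnit_det_expMatrix (θ : ℝ) (hθ : 0 < θ) (n : ℕ) (x : Fin (n+1) → ℝ) (hx : StrictMono x)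
    (P : Matrix (Fin (n+1)) (Fin (n+1)) ℝ)
    (hP : ∀ j k, P j k = Real.exp (-θ * |x j - x k|)) :
    IsUnit P.det := by
  set dd : Fin (n+1) → ℝ := Fin.cases (motive := fun _ => ℝ) 1
    (fun j : Fin n => 1 - Real.exp (2*θ*(x j.castSucc - x j.succ))) with hdd
  set L : Matrix (Fin (n+1)) (Fin (n+1)) ℝ :=
    fun j k => if k ≤ j then Real.exp (θ*(x k - x j)) else 0 with hL
  have key : ∀ j m : Fin (n+1), m ≤ j →
      ∑ k, L j k * (dd k * L m k) = Real.exp (θ*(x m - x j)) := by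
    intro j m hmj
    have hsummand : ∀ k, L j k * (dd k * L m k) =
        Real.exp (θ*(x m - x j)) * Real.exp (-2*θ*x m) *
          (if k ≤ m then Real.exp (2*θ*x k) * dd k else 0) := by
      intro k
      by_cases hkm : k ≤ m
      · have hkj : k ≤ j := hkm.trans hmj
        simp only [hL, if_pos hkm, if_pos hkj]
        have hexp : Real.exp (θ*(x k - x j)) * Real.exp (θ*(x k - x m)) =
            Real.exp (θ*(x m - x j)) * Real.exp (-2*θ*x m) * Real.exp (2*θ*x k) := by
          rw [← Real.exp_add, ← Real.exp_add, ← Real.exp_add]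
          congr 1
          ring
        linear_combination (dd k) * hexp
      · simp only [hL, if_neg hkm]
        ring
    rw [Finset.sum_congr rfl fun k _ => hsummand k, ← Finset.mul_sum, tele_exp θ n x m,
      ← Real.exp_add, ← Real.exp_add]
    congr 1
    ring
  have hfact : P = L * (Matrix.diagonal dd * Lᵀ) := by
    ext j m
    rw [Matrix.mul_apply]
    simp only [Matrix.diagonal_mul, Matrix.transpose_apply]
    rcases le_total m j with h | h
    · rw [key j m h, hP]
      have : |x j - x m| = x j - x m := abs_of_nonneg (by linarith [hx.monotone h])
      rw [this]
      congr 1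
      ring
    · have hswap : ∑ k, L j k * (dd k * L m k) = ∑ k, L m k * (dd k * L j k) :=
        Finset.sum_congr rfl fun k _ => by ring
      rw [hswap, key m j h, hP]
      have : |x j - x m| = x m - x j := by
        rw [abs_of_nonpos (by linarith [hx.monotone h])]; ring
      rw [this]
      congr 1
      ring
  have hddpos : ∀ k, 0 < dd k := by
    intro k
    induction k using Fin.cases with
    | zero => simp [hdd]
    | succ j =>
      simp only [hdd, Fin.cases_succ]
      have h1 : x j.castSucc < x j.succ := hx Fin.castSucc_lt_succ
      have : Real.exp (2*θ*(x j.castSucc - x j.succ)) < 1 :=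
        Real.exp_lt_one_iff.mpr (by nlinarith)
      linarith
  have hdetL : L.det = 1 := by
    rw [Matrix.det_of_lowerTriangular L]
    · have : ∀ j : Fin (n+1), L j j = 1 := fun j => by simp [hL]
      simp [this]
    · intro a b hab
      simp only [hL]
      rw [if_neg]
      exact fun h => absurd (lt_of_lt_of_le hab h) (lt_irrefl _)
  rw [hfact, Matrix.det_mul, Matrix.det_mul, Matrix.det_diagonal, Matrix.det_transpose, hdetL]
  have : 0 < ∏ k, dd k := Finset.prod_pos fun k _ => hddpos k
  exact isUnit_iff_ne_zero.mpr (by positivity)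

theorem sigma_quadform_exponential (θ : ℝ) (hθ : 0 < θ) (n : ℕ)
    (x : Fin (n + 1) → ℝ) (hx : StrictMono x) (h0 : x 0 = 0) (h1 : x (Fin.last n) = 1)
    (P : Matrix (Fin (n + 1)) (Fin (n + 1)) ℝ)
    (hP : ∀ j k, P j k = exp (-θ * |x j - x k|))
    (i : Fin n) (a : ℝ) (ha : a ∈ Icc 0 (x i.succ - x i.castSucc))
    (x₀ : ℝ) (hx₀ : x₀ = x i.castSucc + a)
    (σ₀ : Fin (n + 1) → ℝ) (hσ₀ : ∀ j, σ₀ j = exp (-θ * |x j - x₀|)) :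
    σ₀ ⬝ᵥ (P⁻¹ *ᵥ σ₀) =
      (exp (-2 * θ * a) - 2 * exp (-2 * θ * (x i.succ - x i.castSucc)) +
          exp (-2 * θ * (x i.succ - x i.castSucc - a))) /
        (1 - exp (-2 * θ * (x i.succ - x i.castSucc))) := by
  obtain ⟨ha0, had⟩ := ha
  set D : ℝ := x i.succ - x i.castSucc with hD
  have hDpos : 0 < D := sub_pos.mpr (hx Fin.castSucc_lt_succ)
  set q : ℝ := exp (-θ * D) with hq
  set u : ℝ := exp (-θ * a) with hu
  set v : ℝ := exp (-θ * (D - a)) with hv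
  have hq1 : q < 1 := Real.exp_lt_one_iff.mpr (by nlinarith)
  have hq0 : 0 < q := Real.exp_pos _
  have hden : 1 - q^2 ≠ 0 := by nlinarith
  have huv : u * v = q := by rw [hu, hv, hq, ← Real.exp_add]; congr 1; ring
  set α : ℝ := (u - q*v)/(1 - q^2) with hα
  set β : ℝ := (v - q*u)/(1 - q^2) with hβ
  set w : Fin (n+1) → ℝ := Pi.single i.castSucc α + Pi.single i.succ β with hw
  have hPw : P *ᵥ w = σ₀ := by
    funext j
    have : (P *ᵥ w) j = P j i.castSucc * α + P j i.succ * β := by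
      rw [hw, Matrix.mulVec_add, Matrix.mulVec_single, Matrix.mulVec_single]
      rfl
    rw [this, hσ₀, hP, hP]
    rcases le_or_gt j i.castSucc with h | h
    · have hxj : x j ≤ x i.castSucc := hx.monotone h
      set c : ℝ := x i.castSucc - x j with hc
      have hc0 : 0 ≤ c := by linarith
      have e1 : |x j - x i.castSucc| = c := by rw [abs_of_nonpos (by linarith)]; ring
      have e2 : |x j - x i.succ| = c + D := by rw [abs_of_nonpos (by simp only [hD] at *; linarith)]; ring
      have e3 : |x j - x₀| = c + a := by rw [hx₀, abs_of_nonpos (by linarith)]; ring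
      rw [e1, e2, e3]
      have f1 : exp (-θ*(c + D)) = exp (-θ*c) * q := by rw [hq, ← Real.exp_add]; congr 1; ring
      have f2 : exp (-θ*(c + a)) = exp (-θ*c) * u := by rw [hu, ← Real.exp_add]; congr 1; ring
      rw [f1, f2]
      have : α + q * β = u := by rw [hα, hβ]; field_simp; ring
      linear_combination exp (-θ*c) * this
    · have hj : i.succ ≤ j := h
      have hxj : x i.succ ≤ x j := hx.monotone hj
      set c : ℝ := x j - x i.succ with hc
      have hc0 : 0 ≤ c := by linarith
      have e1 : |x j - x i.castSucc| = c + D := by rw [abs_of_nonneg (by simp only [hD] at *; linarith)]; ring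
      have e2 : |x j - x i.succ| = c := by rw [abs_of_nonneg (by linarith)]
      have e3 : |x j - x₀| = c + (D - a) := by rw [hx₀, abs_of_nonneg (by simp only [hD] at *; linarith)]; ring
      rw [e1, e2, e3]
      have f1 : exp (-θ*(c + D)) = exp (-θ*c) * q := by rw [hq, ← Real.exp_add]; congr 1; ring
      have f2 : exp (-θ*(c + (D - a))) = exp (-θ*c) * v := by rw [hv, ← Real.exp_add]; congr 1; ring
      rw [f1, f2]
      have : q * α + β = v := by rw [hα, hβ]; field_simp; ring
      linear_combination exp (-θ*c) * this
  have hdet : IsUnit P.det := isUnit_det_expMatrix θ hθ n x hx P hP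
  have hinv : P⁻¹ *ᵥ σ₀ = w := by
    rw [← hPw, Matrix.mulVec_mulVec, Matrix.nonsing_inv_mul P hdet, Matrix.one_mulVec]
  rw [hinv, hw, dotProduct_add, dotProduct_single, dotProduct_single,
    hσ₀, hσ₀]
  have g1 : |x i.castSucc - x₀| = a := by rw [hx₀, abs_of_nonpos (by linarith)]; ring
  have g2 : |x i.succ - x₀| = D - a := by rw [hx₀, abs_of_nonneg (by simp only [hD] at *; linarith)]; ring
  rw [g1, g2, ← hu, ← hv]
  have r1 : exp (-2*θ*a) = u^2 := by rw [hu, pow_two, ← Real.exp_add]; congr 1; ring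
  have r2 : exp (-2*θ*D) = q^2 := by rw [hq, pow_two, ← Real.exp_add]; congr 1; ring
  have r3 : exp (-2*θ*(D - a)) = v^2 := by rw [hv, pow_two, ← Real.exp_add]; congr 1; ring
  rw [r1, r2, r3, hα, hβ]
  field_simp
  linear_combination (-2*q) * huv
end

section
/- Let θ > 0 and points x₁ < … < x_n with spacings d_i. For x₀ ∈ [x_i, x_{i+1}] with a = x₀ - x_i, the exponential correlation matrix P and cross-covariance vector σ₀ (entries e^{-θ|x_j - x₀|}) satisfy 1ᵀP⁻¹σ₀ = (e^{-θa} + e^{-θ(d_i - a)})/(1 + e^{-θd_i}). -/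
open Real Set Matrix

theorem ones_sigma_form_exponential (θ : ℝ) (hθ : 0 < θ) (n : ℕ)
    (x : Fin (n + 1) → ℝ) (hx : StrictMono x)
    (P : Matrix (Fin (n + 1)) (Fin (n + 1)) ℝ)
    (hP : ∀ j k, P j k = exp (-θ * |x j - x k|))
    (i : Fin n) (a : ℝ) (ha : a ∈ Icc 0 (x i.succ - x i.castSucc))
    (x₀ : ℝ) (hx₀ : x₀ = x i.castSucc + a)
    (σ₀ : Fin (n + 1) → ℝ) (hσ₀ : ∀ j, σ₀ j = exp (-θ * |x j - x₀|)) :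
    (fun _ => (1:ℝ)) ⬝ᵥ (P⁻¹ *ᵥ σ₀) =
      (exp (-θ * a) + exp (-θ * (x i.succ - x i.castSucc - a))) /
        (1 + exp (-θ * (x i.succ - x i.castSucc))) := by
  set d := x i.succ - x i.castSucc with hd
  have hdpos : 0 < d := sub_pos.2 (hx (Fin.castSucc_lt_succ (i := i)))
  set r := exp (-θ * d) with hrdef
  have hr0 : 0 < r := exp_pos _
  have hr1 : r < 1 := by
    rw [hrdef, exp_lt_one_iff]; nlinarith
  have h1mr2 : (1:ℝ) - r^2 ≠ 0 := by nlinarith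
  have h1pr : (1:ℝ) + r ≠ 0 := by nlinarith
  have h1mr : (1:ℝ) - r ≠ 0 := by nlinarith
  -- value of P on ordered pairs
  have hPle : ∀ j k : Fin (n+1), (k:ℕ) ≤ (j:ℕ) → P j k = exp (-θ * (x j - x k)) := by
    intro j k h
    rw [hP, abs_of_nonneg (sub_nonneg.2 (hx.monotone (by exact_mod_cast h)))]
  -- the differencing matrix B
  set B : Matrix (Fin (n+1)) (Fin (n+1)) ℝ := fun j k =>
    if (j:ℕ) = (k:ℕ) then 1 else if (j:ℕ) = (k:ℕ)+1 then -exp (-θ*(x j - x k)) else 0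
    with hBdef
  have hB0 : ∀ k : Fin (n+1), (B * P) 0 k = P 0 k := by
    intro k
    rw [Matrix.mul_apply]
    rw [Finset.sum_eq_single (0 : Fin (n+1))]
    · simp [hBdef]
    · intro m _ hm
      have h1 : ¬ (((0:Fin (n+1)):ℕ) = (m:ℕ)) := fun h => hm (Fin.ext h.symm)
      have h2 : ¬ (((0:Fin (n+1)):ℕ) = (m:ℕ)+1) := by simp
      have hz : B 0 m = 0 := by
        simp only [hBdef]
        rw [if_neg h1, if_neg h2]
      rw [hz, zero_mul]
    · simp
  have hBsucc : ∀ (l : Fin n) (k : Fin (n+1)),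
      (B * P) l.succ k = P l.succ k - exp (-θ*(x l.succ - x l.castSucc)) * P l.castSucc k := by
    intro l k
    rw [Matrix.mul_apply]
    rw [Finset.sum_eq_add l.castSucc l.succ (Fin.castSucc_lt_succ (i := l)).ne ?_ (by simp) (by simp)]
    · have e1 : B l.succ l.castSucc = -exp (-θ*(x l.succ - x l.castSucc)) := by
        have : (l.succ : ℕ) ≠ (l.castSucc : ℕ) := by simp
        simp [hBdef, this]
      have e2 : B l.succ l.succ = 1 := by simp [hBdef]
      rw [e1, e2]; ring
    · intro m _ hm
      have h1 : ¬ ((l.succ:ℕ) = (m:ℕ)) := fun h => hm.2 (Fin.ext h.symm)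
      have h2 : ¬ ((l.succ:ℕ) = (m:ℕ)+1) := by
        intro h
        exact hm.1 (Fin.ext (by simpa using h.symm))
      have hz : B l.succ m = 0 := by
        simp only [hBdef]
        rw [if_neg h1, if_neg h2]
      rw [hz, zero_mul]
  -- B * P is upper triangular
  have hupper : (B * P).BlockTriangular id := by
    intro j k hk
    simp only [id] at hk
    induction j using Fin.cases with
    | zero => exact absurd hk (by simp)
    | succ l =>
      rw [hBsucc l k]
      have hkn : (k:ℕ) < (l:ℕ)+1 := by simpa [Fin.lt_def] using hk
      have hkl : (k:ℕ) ≤ (l.castSucc:ℕ) := by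
        simp only [Fin.coe_castSucc]; omega
      have hks : (k:ℕ) ≤ (l.succ:ℕ) := by
        simp only [Fin.val_succ]; omega
      rw [hPle l.succ k hks, hPle l.castSucc k hkl, ← exp_add]
      rw [sub_eq_zero]
      congr 1; ring
  have hdiag0 : (B * P) 0 0 = 1 := by
    rw [hB0, hP]; simp
  have hdiagsucc : ∀ l : Fin n, (B * P) l.succ l.succ
      = 1 - exp (-θ*(x l.succ - x l.castSucc)) * exp (-θ*(x l.succ - x l.castSucc)) := by
    intro l
    rw [hBsucc]
    have e1 : P l.succ l.succ = 1 := by rw [hP]; simp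
    have e2 : P l.castSucc l.succ = exp (-θ*(x l.succ - x l.castSucc)) := by
      rw [hP, abs_sub_comm,
        abs_of_nonneg (sub_nonneg.2 (hx (Fin.castSucc_lt_succ (i := l))).le)]
    rw [e1, e2]
  have hdiagne : ∀ j : Fin (n+1), (B * P) j j ≠ 0 := by
    intro j
    induction j using Fin.cases with
    | zero => rw [hdiag0]; norm_num
    | succ l =>
      rw [hdiagsucc l]
      have hδ : 0 < x l.succ - x l.castSucc := sub_pos.2 (hx (Fin.castSucc_lt_succ (i := l)))
      have he : exp (-θ*(x l.succ - x l.castSucc)) < 1 := by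
        rw [exp_lt_one_iff]; nlinarith
      have he0 : 0 < exp (-θ*(x l.succ - x l.castSucc)) := exp_pos _
      nlinarith
  have hdetBP : (B * P).det ≠ 0 := by
    rw [Matrix.det_of_upperTriangular hupper]
    exact Finset.prod_ne_zero_iff.2 fun j _ => hdiagne j
  have hBlow : B.BlockTriangular (OrderDual.toDual) := by
    intro j k hk
    have hjk : (j:ℕ) < (k:ℕ) := hk
    have h1 : (j:ℕ) ≠ (k:ℕ) := by omega
    have h2 : (j:ℕ) ≠ (k:ℕ)+1 := by omega
    simp [hBdef, h1, h2]
  have hdetB : B.det = 1 := by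
    rw [Matrix.det_of_lowerTriangular B hBlow]
    apply Finset.prod_eq_one
    intro j _
    simp [hBdef]
  have hdetP : IsUnit P.det := by
    apply isUnit_iff_ne_zero.2
    intro h
    rw [Matrix.det_mul, hdetB, h, one_mul] at hdetBP
    exact hdetBP rfl
  -- the coefficient vector
  set c₁ := (exp (-θ*a) - r * exp (-θ*(d-a))) / (1 - r^2) with hc₁
  set c₂ := (exp (-θ*(d-a)) - r * exp (-θ*a)) / (1 - r^2) with hc₂
  set v : Fin (n+1) → ℝ := fun j => if j = i.castSucc then c₁ else if j = i.succ then c₂ else 0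
    with hvdef
  have hPv : P *ᵥ v = σ₀ := by
    funext j
    rw [Matrix.mulVec, dotProduct]
    rw [Finset.sum_eq_add i.castSucc i.succ (Fin.castSucc_lt_succ (i := i)).ne ?_ (by simp) (by simp)]
    · have e1 : v i.castSucc = c₁ := by simp [hvdef]
      have e2 : v i.succ = c₂ := by
        simp [hvdef, (Fin.castSucc_lt_succ (i := i)).ne']
      rw [e1, e2, hσ₀]
      rcases le_or_gt (j:ℕ) (i:ℕ) with hj | hj
      · -- j ≤ i.castSucc
        have hxj : x j ≤ x i.castSucc := hx.monotone (by simpa [Fin.le_def] using hj)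
        have p1 : P j i.castSucc = exp (-θ * (x i.castSucc - x j)) := by
          rw [hP, abs_of_nonpos (by linarith), neg_sub]
        have p2 : P j i.succ = exp (-θ * (x i.castSucc - x j)) * r := by
          have hxs : x j ≤ x i.succ := by
            have := hx (Fin.castSucc_lt_succ (i := i)); linarith
          rw [hP, abs_of_nonpos (by linarith), neg_sub, hrdef, ← exp_add]
          congr 1; rw [hd]; ring
        have pσ : |x j - x₀| = (x i.castSucc - x j) + a := by
          rw [hx₀, abs_of_nonpos (by linarith [ha.1]), neg_sub]; ring
        rw [p1, p2, pσ]
        have : exp (-θ * (x i.castSucc - x j + a))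
            = exp (-θ * (x i.castSucc - x j)) * exp (-θ * a) := by
          rw [← exp_add]; congr 1; ring
        rw [this, hc₁, hc₂]
        field_simp
        ring
      · -- i.succ ≤ j
        have hji : (i:ℕ)+1 ≤ (j:ℕ) := hj
        have hxj : x i.succ ≤ x j := hx.monotone (by simpa [Fin.le_def] using hji)
        have p2 : P j i.succ = exp (-θ * (x j - x i.succ)) := by
          rw [hP, abs_of_nonneg (by linarith)]
        have p1 : P j i.castSucc = exp (-θ * (x j - x i.succ)) * r := by
          have hxs : x i.castSucc ≤ x j := by
            have := hx (Fin.castSucc_lt_succ (i := i)); linarith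
          rw [hP, abs_of_nonneg (by linarith), hrdef, ← exp_add]
          congr 1; rw [hd]; ring
        have pσ : |x j - x₀| = (x j - x i.succ) + (d - a) := by
          have had : a ≤ x i.succ - x i.castSucc := hd ▸ ha.2
          have hx0le : x₀ ≤ x i.succ := by rw [hx₀]; linarith
          rw [abs_of_nonneg (by linarith), hx₀, hd]; ring
        rw [p1, p2, pσ]
        have : exp (-θ * (x j - x i.succ + (d - a)))
            = exp (-θ * (x j - x i.succ)) * exp (-θ * (d-a)) := by
          rw [← exp_add]; congr 1; ring
        rw [this, hc₁, hc₂]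
        field_simp
        ring
    · intro m _ hm
      simp [hvdef, hm.1, hm.2]
  -- finish
  have hsolve : P⁻¹ *ᵥ σ₀ = v := by
    rw [← hPv, Matrix.mulVec_mulVec, Matrix.nonsing_inv_mul P hdetP, Matrix.one_mulVec]
  rw [hsolve, dotProduct]
  rw [Finset.sum_eq_add i.castSucc i.succ (Fin.castSucc_lt_succ (i := i)).ne ?_ (by simp) (by simp)]
  · have e1 : v i.castSucc = c₁ := by simp [hvdef]
    have e2 : v i.succ = c₂ := by simp [hvdef, (Fin.castSucc_lt_succ (i := i)).ne']
    rw [e1, e2, hc₁, hc₂]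
    rw [show (1:ℝ) - r^2 = (1-r)*(1+r) by ring]
    field_simp
    ring
  · intro m _ hm
    simp [hvdef, hm.1, hm.2]
end

section
/- Consider a bivariate collocated setup: Z = (Z₁ᵀ, Z₂ᵀ)ᵀ with block covariance matrix Σ = [[C₁₁, cC₁₁],[cC₁₁, C₂₂]] for some constant c ∈ ℝ (with Σ positive definite), and cross-covariance vector σ₀ = (σ₁₀ᵀ, cσ₁₀ᵀ)ᵀ. Then the simple cokriging predictor σ₀ᵀΣ⁻¹Z equals the simple kriging predictor σ₁₀ᵀC₁₁⁻¹Z₁, and the cokriging variance σ₀₀ - σ₀ᵀΣ⁻¹σ₀ equals the kriging variance σ₀₀ - σ₁₀ᵀC₁₁⁻¹σ₁₀. -/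
open Real Set Matrix

theorem cokriging_reduces_to_kriging (n : ℕ) (c : ℝ)
    (C₁₁ C₂₂ : Matrix (Fin n) (Fin n) ℝ)
    (Sig : Matrix (Fin n ⊕ Fin n) (Fin n ⊕ Fin n) ℝ)
    (hSig : Sig = Matrix.fromBlocks C₁₁ (c • C₁₁) (c • C₁₁) C₂₂)
    (hSigpd : Sig.PosDef)
    (hC₁₁ : IsUnit C₁₁.det) (hSchur : IsUnit (C₂₂ - (c ^ 2) • C₁₁).det)
    (z₁ z₂ σ₁₀ : Fin n → ℝ) (σ₀₀ : ℝ)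
    (Z : Fin n ⊕ Fin n → ℝ) (hZ : Z = Sum.elim z₁ z₂)
    (σ₀ : Fin n ⊕ Fin n → ℝ) (hσ₀ : σ₀ = Sum.elim σ₁₀ (c • σ₁₀)) :
    σ₀ ⬝ᵥ (Sig⁻¹ *ᵥ Z) = σ₁₀ ⬝ᵥ (C₁₁⁻¹ *ᵥ z₁) ∧
      σ₀₀ - σ₀ ⬝ᵥ (Sig⁻¹ *ᵥ σ₀) = σ₀₀ - σ₁₀ ⬝ᵥ (C₁₁⁻¹ *ᵥ σ₁₀) := by
  -- C₁₁ is symmetric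
  have hSigSym : Sigᵀ = Sig := hSigpd.isHermitian.eq
  have hC₁₁sym : C₁₁ᵀ = C₁₁ := by
    have := congrArg Matrix.toBlocks₁₁ hSigSym
    simp [hSig, Matrix.fromBlocks_transpose, Matrix.toBlocks₁₁] at this
    ext i j
    exact congrFun (congrFun this i) j
  -- the candidate weight vector
  set w : Fin n ⊕ Fin n → ℝ := Sum.elim (C₁₁⁻¹ *ᵥ σ₁₀) 0 with hw
  have hmul : C₁₁ *ᵥ (C₁₁⁻¹ *ᵥ σ₁₀) = σ₁₀ := by
    rw [Matrix.mulVec_mulVec, Matrix.mul_nonsing_inv _ hC₁₁, Matrix.one_mulVec]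
  have hSw : Sig *ᵥ w = σ₀ := by
    rw [hSig, hw, hσ₀, Matrix.fromBlocks_mulVec]
    simp [hmul, Matrix.smul_mulVec, Matrix.mul_nonsing_inv _ hC₁₁]
  have hSigdet : IsUnit Sig.det := isUnit_iff_ne_zero.mpr (ne_of_gt hSigpd.det_pos)
  have hinv : Sig⁻¹ *ᵥ σ₀ = w := by
    rw [← hSw, Matrix.mulVec_mulVec, Matrix.nonsing_inv_mul _ hSigdet, Matrix.one_mulVec]
  have hSiginvSym : Sig⁻¹ᵀ = Sig⁻¹ := by
    rw [Matrix.transpose_nonsing_inv, hSigSym]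
  have hC₁₁invSym : C₁₁⁻¹ᵀ = C₁₁⁻¹ := by
    rw [Matrix.transpose_nonsing_inv, hC₁₁sym]
  have hdot : ∀ v : Fin n ⊕ Fin n → ℝ, σ₀ ⬝ᵥ (Sig⁻¹ *ᵥ v) = w ⬝ᵥ v := by
    intro v
    rw [Matrix.dotProduct_mulVec, ← Matrix.mulVec_transpose, hSiginvSym, hinv]
  constructor
  · rw [hdot, hZ, hw]
    simp [Matrix.dotProduct_mulVec, ← Matrix.mulVec_transpose, hC₁₁invSym]
  · rw [hdot, hσ₀, hw]
    simp [Matrix.dotProduct_mulVec, ← Matrix.mulVec_transpose, hC₁₁invSym]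
end

section
/- Let θ > 0, n ≥ 2, and consider the Bayesian risk R₂(d₁,…,d_{n-1}) = ∫_{θ₁}^{θ₂} [1 - (n-1)/θ + 2∑_{i=1}^{n-1} d_i/(e^{2θd_i}-1)] r(θ) dθ for a probability density r supported on (θ₁, θ₂) with 0 < θ₁ < θ₂ < ∞. Then R₂ is Schur-convex on the simplex {d_i > 0 : ∑d_i = 1} and minimized at the equispaced design d_i = 1/(n-1). -/
open Real Set Finset MeasureTheory

lemma psi_nonneg {u : ℝ} (hu : 0 ≤ u) : 0 ≤ (u - 2) * Real.exp u + u + 2 := by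
  set g : ℝ → ℝ := fun u => (u - 1) * Real.exp u + 1 with hg
  have hgderiv : ∀ x : ℝ, HasDerivAt g (x * Real.exp x) x := by
    intro x
    have h1 : HasDerivAt (fun u : ℝ => (u - 1) * Real.exp u)
        (1 * Real.exp x + (x - 1) * Real.exp x) x :=
      (((hasDerivAt_id x).sub_const 1)).mul (Real.hasDerivAt_exp x)
    have := h1.add_const 1
    exact this.congr_deriv (by ring)
  have hgmono : MonotoneOn g (Ici 0) := by
    apply monotoneOn_of_deriv_nonneg (convex_Ici 0)
      (fun x _ => (hgderiv x).continuousAt.continuousWithinAt)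
      (fun x hx => ((hgderiv x).differentiableAt).differentiableWithinAt)
    intro x hx
    rw [(hgderiv x).deriv]
    have : (0:ℝ) < x := by simpa using hx
    positivity
  have hg0 : g 0 = 0 := by simp [hg]
  have hgnn : ∀ x ≥ (0:ℝ), 0 ≤ g x := fun x hx => by
    have := hgmono (self_mem_Ici) hx hx; rwa [hg0] at this
  set p : ℝ → ℝ := fun u => (u - 2) * Real.exp u + u + 2 with hp
  have hpderiv : ∀ x : ℝ, HasDerivAt p (g x) x := by
    intro x
    have h1 : HasDerivAt (fun u : ℝ => (u - 2) * Real.exp u)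
        (1 * Real.exp x + (x - 2) * Real.exp x) x :=
      (((hasDerivAt_id x).sub_const 2)).mul (Real.hasDerivAt_exp x)
    have := (h1.add (hasDerivAt_id x)).add_const 2
    exact this.congr_deriv (by simp [hg]; ring)
  have hpmono : MonotoneOn p (Ici 0) := by
    apply monotoneOn_of_deriv_nonneg (convex_Ici 0)
      (fun x _ => (hpderiv x).continuousAt.continuousWithinAt)
      (fun x hx => ((hpderiv x).differentiableAt).differentiableWithinAt)
    intro x hx
    rw [(hpderiv x).deriv]
    exact hgnn x (le_of_lt (by simpa using hx))
  have hp0 : p 0 = 0 := by simp [hp]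
  have := hpmono self_mem_Ici hu hu
  rw [hp0] at this; simpa [hp] using this

noncomputable def kf (θ d : ℝ) : ℝ := d / (Real.exp (2*θ*d) - 1)
noncomputable def kf1 (θ d : ℝ) : ℝ :=
  (Real.exp (2*θ*d) - 1)⁻¹ - d * (2*θ*Real.exp (2*θ*d)) * ((Real.exp (2*θ*d) - 1)^2)⁻¹
noncomputable def kf2 (θ d : ℝ) : ℝ :=
  -4*θ*Real.exp (2*θ*d) * ((Real.exp (2*θ*d) - 1)^2)⁻¹
  - 4*θ^2*d*Real.exp (2*θ*d) * ((Real.exp (2*θ*d) - 1)^2)⁻¹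
  + 8*θ^2*d*(Real.exp (2*θ*d))^2 * ((Real.exp (2*θ*d) - 1)^3)⁻¹

lemma expE_gt (hθ : 0 < θ) (hd : 0 < d) : 1 < Real.exp (2*θ*d) := by
  rw [show (1:ℝ) = Real.exp 0 by simp]
  exact Real.exp_lt_exp.mpr (by positivity)

lemma hasDerivAt_E (θ d : ℝ) :
    HasDerivAt (fun x => Real.exp (2*θ*x)) (2*θ*Real.exp (2*θ*d)) d := by
  have h : HasDerivAt (fun x : ℝ => 2*θ*x) (2*θ) d := by
    simpa using (hasDerivAt_id d).const_mul (2*θ)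
  simpa [Function.comp_def, mul_comm, mul_assoc, mul_left_comm] using (Real.hasDerivAt_exp (2*θ*d)).comp d h

lemma hasDerivAt_kf {θ d : ℝ} (hθ : 0 < θ) (hd : 0 < d) :
    HasDerivAt (kf θ) (kf1 θ d) d := by
  have hE := expE_gt hθ hd
  have hne : Real.exp (2*θ*d) - 1 ≠ 0 := by linarith
  have hden : HasDerivAt (fun x => Real.exp (2*θ*x) - 1) (2*θ*Real.exp (2*θ*d)) d :=
    (hasDerivAt_E θ d).sub_const 1
  have := (hasDerivAt_id d).div hden hne
  refine this.congr_deriv ?_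
  unfold kf1
  simp only [id_eq]
  field_simp

lemma hasDerivAt_kf1 {θ d : ℝ} (hθ : 0 < θ) (hd : 0 < d) :
    HasDerivAt (kf1 θ) (kf2 θ d) d := by
  have hE := expE_gt hθ hd
  have hne : Real.exp (2*θ*d) - 1 ≠ 0 := by linarith
  have hne2 : (Real.exp (2*θ*d) - 1)^2 ≠ 0 := pow_ne_zero _ hne
  have hden : HasDerivAt (fun x => Real.exp (2*θ*x) - 1) (2*θ*Real.exp (2*θ*d)) d :=
    (hasDerivAt_E θ d).sub_const 1
  have h1 : HasDerivAt (fun x => (Real.exp (2*θ*x) - 1)⁻¹)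
      (-(2*θ*Real.exp (2*θ*d)) / (Real.exp (2*θ*d) - 1)^2) d := hden.inv hne
  have hsq : HasDerivAt (fun x => (Real.exp (2*θ*x) - 1)^2)
      (2 * (Real.exp (2*θ*d) - 1) * (2*θ*Real.exp (2*θ*d))) d := by
    simpa using hden.fun_pow 2
  have h2a : HasDerivAt (fun x => x * (2*θ*Real.exp (2*θ*x)))
      (1 * (2*θ*Real.exp (2*θ*d)) + d * (2*θ*(2*θ*Real.exp (2*θ*d)))) d := by
    exact (hasDerivAt_id d).mul (((hasDerivAt_E θ d)).const_mul (2*θ))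
  have h2b : HasDerivAt (fun x => ((Real.exp (2*θ*x) - 1)^2)⁻¹)
      (-(2 * (Real.exp (2*θ*d) - 1) * (2*θ*Real.exp (2*θ*d))) / ((Real.exp (2*θ*d) - 1)^2)^2) d :=
    hsq.inv hne2
  have h2 := h2a.mul h2b
  have := h1.sub h2
  refine this.congr_deriv ?_
  unfold kf2
  field_simp
  ring

lemma kf2_nonneg {θ d : ℝ} (hθ : 0 < θ) (hd : 0 < d) : 0 ≤ kf2 θ d := by
  have hE := expE_gt hθ hd
  set E := Real.exp (2*θ*d) with hEdef
  have hE0 : (0:ℝ) < E - 1 := by linarith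
  have hψ : 0 ≤ (2*θ*d - 2) * E + 2*θ*d + 2 := by
    have := psi_nonneg (u := 2*θ*d) (by positivity)
    simpa [hEdef] using this
  have hform : kf2 θ d = 2*θ*E*((E-1)^3)⁻¹ * ((2*θ*d - 2) * E + 2*θ*d + 2) := by
    unfold kf2
    rw [← hEdef]
    field_simp
    ring
  rw [hform]
  have hEpos : 0 < E := by linarith
  positivity

lemma continuousOn_kf2 {θ : ℝ} (hθ : 0 < θ) : ContinuousOn (kf2 θ) (Ioi 0) := by
  have hcE : Continuous (fun d : ℝ => Real.exp (2*θ*d)) :=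
    Real.continuous_exp.comp (continuous_const.mul continuous_id)
  have hne : ∀ d ∈ Ioi (0:ℝ), Real.exp (2*θ*d) - 1 ≠ 0 := fun d hd => by
    have := expE_gt hθ (mem_Ioi.mp hd); linarith
  unfold kf2
  apply ContinuousOn.add
  apply ContinuousOn.sub
  · exact (continuous_const.mul hcE).continuousOn.mul
      (((hcE.sub continuous_const).pow 2).continuousOn.inv₀
        (fun d hd => pow_ne_zero _ (hne d hd)))
  · exact ((continuous_const.mul continuous_id).mul hcE).continuousOn.mul
      (((hcE.sub continuous_const).pow 2).continuousOn.inv₀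
        (fun d hd => pow_ne_zero _ (hne d hd)))
  · exact (((continuous_const.mul continuous_id).mul (hcE.pow 2))).continuousOn.mul
      (((hcE.sub continuous_const).pow 3).continuousOn.inv₀
        (fun d hd => pow_ne_zero _ (hne d hd)))

lemma kf2_intInt {θ a b : ℝ} (hθ : 0 < θ) (ha : 0 < a) (hb : 0 < b) :
    IntervalIntegrable (kf2 θ) volume a b := by
  apply ContinuousOn.intervalIntegrable
  apply (continuousOn_kf2 hθ).mono
  intro t ht
  rcases mem_uIcc.mp ht with h | h
  · exact lt_of_lt_of_le ha h.1
  · exact lt_of_lt_of_le hb h.1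

lemma g_intInt {θ a b z : ℝ} (hθ : 0 < θ) (ha : 0 < a) (hb : 0 < b) :
    IntervalIntegrable (fun t => max (z - t) 0 * kf2 θ t) volume a b := by
  apply IntervalIntegrable.continuousOn_mul (kf2_intInt hθ ha hb)
  exact (continuous_const.sub continuous_id).max continuous_const |>.continuousOn

lemma kf_rep {θ a z : ℝ} (hθ : 0 < θ) (ha : 0 < a) (haz : a ≤ z) (hz1 : z ≤ 1) :
    kf θ z = kf θ a + kf1 θ a * (z - a)
      + ∫ t in a..(1:ℝ), max (z - t) 0 * kf2 θ t := by
  have hz : 0 < z := lt_of_lt_of_le ha haz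
  have hsplit : (∫ t in a..(1:ℝ), max (z - t) 0 * kf2 θ t)
      = (∫ t in a..z, max (z - t) 0 * kf2 θ t) + ∫ t in z..(1:ℝ), max (z - t) 0 * kf2 θ t :=
    (intervalIntegral.integral_add_adjacent_intervals (g_intInt hθ ha hz)
      (g_intInt hθ hz one_pos)).symm
  have hzero : (∫ t in z..(1:ℝ), max (z - t) 0 * kf2 θ t) = 0 := by
    rw [intervalIntegral.integral_congr (g := fun _ => (0:ℝ))
      (fun t ht => by
        rw [uIcc_of_le hz1] at ht
        have : z - t ≤ 0 := by linarith [ht.1]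
        simp [max_eq_right this])]
    simp
  have hmain : (∫ t in a..z, max (z - t) 0 * kf2 θ t) = ∫ t in a..z, (z - t) * kf2 θ t := by
    apply intervalIntegral.integral_congr
    intro t ht
    rw [uIcc_of_le haz] at ht
    have : 0 ≤ z - t := by linarith [ht.2]
    simp [max_eq_left this]
  have hmem : ∀ t ∈ uIcc a z, 0 < t := by
    intro t ht; rw [uIcc_of_le haz] at ht; exact lt_of_lt_of_le ha ht.1
  have hparts : (∫ t in a..z, (z - t) * kf2 θ t)
      = (z - z) * kf1 θ z - (z - a) * kf1 θ a - ∫ t in a..z, (-1) * kf1 θ t := by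
    apply intervalIntegral.integral_mul_deriv_eq_deriv_mul
      (u := fun t => z - t) (u' := fun _ => (-1:ℝ)) (v := kf1 θ) (v' := kf2 θ)
    · intro t _; simpa using (hasDerivAt_id t).const_sub z
    · intro t ht; exact hasDerivAt_kf1 hθ (hmem t ht)
    · exact intervalIntegrable_const
    · exact kf2_intInt hθ ha hz
  have hftc : (∫ t in a..z, kf1 θ t) = kf θ z - kf θ a := by
    apply intervalIntegral.integral_eq_sub_of_hasDerivAt
    · intro t ht; exact hasDerivAt_kf hθ (hmem t ht)
    · apply ContinuousOn.intervalIntegrable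
      exact fun t ht => (hasDerivAt_kf1 hθ (hmem t ht)).continuousAt.continuousWithinAt
  have hneg : (∫ t in a..z, (-1) * kf1 θ t) = -(kf θ z - kf θ a) := by
    simp only [neg_one_mul]
    rw [intervalIntegral.integral_neg, hftc]
  rw [hsplit, hzero, hmain, hparts, hneg]
  ring


lemma karamata {m : ℕ} {θ : ℝ} (hθ : 0 < θ) (x y : Fin m → ℝ)
    (hx : ∀ i, 0 < x i) (hy : ∀ i, 0 < y i)
    (hxs : ∑ i, x i = 1) (hys : ∑ i, y i = 1)
    (hmaj : MajorizedBy x y) : ∑ i, kf θ (x i) ≤ ∑ i, kf θ (y i) := by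
  rcases Nat.eq_zero_or_pos m with hm | hm
  · subst hm; simp
  haveI : Nonempty (Fin m) := ⟨⟨0, hm⟩⟩
  have hne : (Finset.univ : Finset (Fin m)).Nonempty := Finset.univ_nonempty
  set a : ℝ := Finset.univ.inf' hne (fun i => min (x i) (y i)) with hadef
  have ha : 0 < a := by
    rw [hadef, Finset.lt_inf'_iff]
    exact fun i _ => lt_min (hx i) (hy i)
  have hax : ∀ i, a ≤ x i := fun i =>
    le_trans (Finset.inf'_le _ (Finset.mem_univ i)) (min_le_left _ _)
  have hay : ∀ i, a ≤ y i := fun i =>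
    le_trans (Finset.inf'_le _ (Finset.mem_univ i)) (min_le_right _ _)
  have hx1 : ∀ i, x i ≤ 1 := by
    intro i
    rw [← hxs]
    exact Finset.single_le_sum (fun j _ => (hx j).le) (Finset.mem_univ i)
  have hy1 : ∀ i, y i ≤ 1 := by
    intro i
    rw [← hys]
    exact Finset.single_le_sum (fun j _ => (hy j).le) (Finset.mem_univ i)
  have ha1 : a ≤ 1 := le_trans (hax ⟨0, hm⟩) (hx1 _)
  have hrepx : ∀ i, kf θ (x i) = kf θ a + kf1 θ a * (x i - a)
      + ∫ t in a..(1:ℝ), max (x i - t) 0 * kf2 θ t :=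
    fun i => kf_rep hθ ha (hax i) (hx1 i)
  have hrepy : ∀ i, kf θ (y i) = kf θ a + kf1 θ a * (y i - a)
      + ∫ t in a..(1:ℝ), max (y i - t) 0 * kf2 θ t :=
    fun i => kf_rep hθ ha (hay i) (hy1 i)
  have hGcont : ∀ z : Fin m → ℝ, Continuous (fun t : ℝ => ∑ i, max (z i - t) 0) :=
    fun z => continuous_finset_sum _ (fun i _ =>
      (continuous_const.sub continuous_id).max continuous_const)
  have hGint : ∀ z : Fin m → ℝ,
      IntervalIntegrable (fun t => (∑ i, max (z i - t) 0) * kf2 θ t) volume a 1 :=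
    fun z => IntervalIntegrable.continuousOn_mul (kf2_intInt hθ ha one_pos)
      ((hGcont z).continuousOn)
  have hsum : ∀ z : Fin m → ℝ,
      (∑ i, (kf θ a + kf1 θ a * (z i - a) + ∫ t in a..(1:ℝ), max (z i - t) 0 * kf2 θ t))
      = m * kf θ a + kf1 θ a * ((∑ i, z i) - m * a)
        + ∫ t in a..(1:ℝ), (∑ i, max (z i - t) 0) * kf2 θ t := by
    intro z
    have hswap : (∑ i, ∫ t in a..(1:ℝ), max (z i - t) 0 * kf2 θ t)
        = ∫ t in a..(1:ℝ), (∑ i, max (z i - t) 0) * kf2 θ t := by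
      rw [← intervalIntegral.integral_finset_sum (fun i _ => g_intInt hθ ha one_pos)]
      exact intervalIntegral.integral_congr (fun t _ => by rw [Finset.sum_mul])
    rw [Finset.sum_add_distrib, Finset.sum_add_distrib, hswap]
    simp [Finset.mul_sum, Finset.sum_sub_distrib, mul_sub, Finset.card_univ]
    ring
  have hint : (∫ t in a..(1:ℝ), (∑ i, max (x i - t) 0) * kf2 θ t)
      ≤ ∫ t in a..(1:ℝ), (∑ i, max (y i - t) 0) * kf2 θ t := by
    apply intervalIntegral.integral_mono_on ha1 (hGint x) (hGint y)
    intro t ht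
    exact mul_le_mul_of_nonneg_right (hmaj.2 t)
      (kf2_nonneg hθ (lt_of_lt_of_le ha ht.1))
  calc ∑ i, kf θ (x i)
      = m * kf θ a + kf1 θ a * ((∑ i, x i) - m * a)
        + ∫ t in a..(1:ℝ), (∑ i, max (x i - t) 0) * kf2 θ t := by
        rw [Finset.sum_congr rfl (fun i _ => hrepx i), hsum]
    _ ≤ m * kf θ a + kf1 θ a * ((∑ i, y i) - m * a)
        + ∫ t in a..(1:ℝ), (∑ i, max (y i - t) 0) * kf2 θ t := by
        rw [hxs, hys]; linarith
    _ = ∑ i, kf θ (y i) := by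
        rw [Finset.sum_congr rfl (fun i _ => hrepy i), hsum]

theorem bayes_risk_imspe_min_equispaced (n : ℕ) (hn : 2 ≤ n)
    (θ₁ θ₂ : ℝ) (hθ₁ : 0 < θ₁) (hθ₁₂ : θ₁ < θ₂)
    (r : ℝ → ℝ) (hr : ∀ θ, 0 ≤ r θ) (hrsupp : ∀ θ, θ ∉ Ioo θ₁ θ₂ → r θ = 0)
    (hrint : ∫ θ in θ₁..θ₂, r θ = 1)
    (R₂ : (Fin (n - 1) → ℝ) → ℝ)
    (hR₂ : ∀ d, R₂ d =
      ∫ θ in θ₁..θ₂,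
        (1 - (n - 1 : ℝ) / θ + 2 * ∑ i, d i / (exp (2 * θ * d i) - 1)) * r θ)
    (s : Set (Fin (n - 1) → ℝ))
    (hs : s = {d | (∀ i, 0 < d i) ∧ ∑ i, d i = 1}) :
    SchurConvexOn s R₂ ∧ ∀ d ∈ s, R₂ (fun _ => 1 / (n - 1 : ℝ)) ≤ R₂ d := by
  -- r is interval integrable
  have hr_ii : IntervalIntegrable r volume θ₁ θ₂ := by
    by_contra h
    rw [intervalIntegral.integral_undef h] at hrint
    norm_num at hrint
  -- integrand integrability for positive d
  have hInt : ∀ d : Fin (n-1) → ℝ, (∀ i, 0 < d i) →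
      IntervalIntegrable (fun θ =>
        (1 - (n - 1 : ℝ) / θ + 2 * ∑ i, d i / (exp (2 * θ * d i) - 1)) * r θ)
        volume θ₁ θ₂ := by
    intro d hd
    apply IntervalIntegrable.continuousOn_mul hr_ii
    rw [uIcc_of_le hθ₁₂.le]
    have hpos : ∀ θ ∈ Icc θ₁ θ₂, (0:ℝ) < θ := fun θ hθ => lt_of_lt_of_le hθ₁ hθ.1
    apply ContinuousOn.add
    · apply ContinuousOn.sub continuousOn_const
      exact ContinuousOn.div continuousOn_const continuousOn_id
        (fun θ hθ => ne_of_gt (hpos θ hθ))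
    · apply ContinuousOn.mul continuousOn_const
      apply continuousOn_finset_sum
      intro i _
      apply ContinuousOn.div continuousOn_const
      · exact (Real.continuous_exp.comp
          ((continuous_mul_right (d i)).comp (continuous_mul_left 2))).continuousOn.sub
          continuousOn_const
      · intro θ hθ
        have := expE_gt (hpos θ hθ) (hd i)
        linarith
  -- key: Schur convexity
  have hschur : SchurConvexOn s R₂ := by
    intro x hx y hy hmaj
    rw [hs] at hx hy
    obtain ⟨hxp, hxs⟩ := hx
    obtain ⟨hyp, hys⟩ := hy
    rw [hR₂ x, hR₂ y]
    apply intervalIntegral.integral_mono_on hθ₁₂.le (hInt x hxp) (hInt y hyp)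
    intro θ hθ
    have hθ0 : 0 < θ := lt_of_lt_of_le hθ₁ hθ.1
    have hk := karamata hθ0 x y hxp hyp hxs hys hmaj
    apply mul_le_mul_of_nonneg_right _ (hr θ)
    have : (∑ i, x i / (exp (2 * θ * x i) - 1)) ≤ ∑ i, y i / (exp (2 * θ * y i) - 1) := hk
    linarith
  refine ⟨hschur, ?_⟩
  -- the equispaced design is in s and majorized by every d ∈ s
  intro d hd
  have hn1 : (0:ℝ) < (n:ℝ) - 1 := by
    have : (2:ℝ) ≤ (n:ℝ) := by exact_mod_cast hn
    linarith
  have hcard : ((Finset.univ : Finset (Fin (n-1))).card : ℝ) = (n:ℝ) - 1 := by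
    rw [Finset.card_univ, Fintype.card_fin]
    rw [Nat.cast_sub (by omega)]
    norm_num
  have hc0sum : (∑ _i : Fin (n-1), (1 / ((n:ℝ) - 1))) = 1 := by
    rw [Finset.sum_const, nsmul_eq_mul, hcard]
    field_simp
  have hc0mem : (fun _ : Fin (n-1) => 1 / ((n:ℝ) - 1)) ∈ s := by
    rw [hs]
    exact ⟨fun i => by positivity, hc0sum⟩
  rw [hs] at hd
  obtain ⟨hdp, hds⟩ := hd
  apply hschur _ hc0mem _ (by rw [hs]; exact ⟨hdp, hds⟩)
  constructor
  · rw [hc0sum, hds]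
  · intro t
    rcases le_or_gt (1 / ((n:ℝ) - 1)) t with h | h
    · have : (∑ _i : Fin (n-1), max (1 / ((n:ℝ) - 1) - t) 0) = 0 := by
        apply Finset.sum_eq_zero
        intro i _
        exact max_eq_right (by linarith)
      rw [this]
      exact Finset.sum_nonneg (fun i _ => le_max_right _ _)
    · have hL : (∑ _i : Fin (n-1), max (1 / ((n:ℝ) - 1) - t) 0)
          = ∑ _i : Fin (n-1), (1 / ((n:ℝ) - 1) - t) := by
        apply Finset.sum_congr rfl
        intro i _
        exact max_eq_left (by linarith)
      rw [hL]
      calc (∑ _i : Fin (n-1), (1 / ((n:ℝ) - 1) - t))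
          = (∑ _i : Fin (n-1), (1 / ((n:ℝ) - 1))) - ∑ _i : Fin (n-1), t :=
            Finset.sum_sub_distrib _ _
        _ = (∑ i, d i) - ∑ _i : Fin (n-1), t := by rw [hc0sum, hds]
        _ = ∑ i, (d i - t) := (Finset.sum_sub_distrib _ _).symm
        _ ≤ ∑ i, max (d i - t) 0 := Finset.sum_le_sum (fun i _ => le_max_left _ _)
end
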